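/- arXiv:math/0108029 — 5 statements merged into one kernel-verified Lean document; each statement's English description precedes it below -/
import Mathlib

section
/- Let μ be a positive Borel measure on ℝⁿ × (0,∞). Suppose there exist constants C > 0 and η ∈ (0,1) such that for every cube Q in ℝⁿ one can find countably many pairwise disjoint subcubes Q_i of Q with ∑ |Q_i| ≤ (1−η)|Q| and μ(R_Q \ ⋃ R_{Q_i}) ≤ C|Q|, where R_Q = Q × (0, ℓ(Q)] is the Carleson box over Q. Then μ is a Carleson measure with Carleson norm sup_Q μ(R_Q)/|Q| ≤ C/η. -/
/-! Iterating the subdivision, the mass of `R_Q` outside the boxes of the `k`-th generation of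
subcubes is at most `C (1 - η)^k |Q|`, and the geometric series sums to `C / η`. To avoid assuming
`μ(R_Q) < ∞` beforehand, the induction runs over truncated boxes instead: a point of height `t`
with `t ^ n > (1 - η) ^ N |Q|` lies in no box of generation `N`, as each such subcube has volume at
most `(1 - η) ^ N |Q|`; so after `N` steps it has been accounted for, and every point of `R_Q` is
reached for some `N`. -/

open MeasureTheory Set

/-- The axis-parallel closed cube in `ℝⁿ` with lower-left corner `a` and sidelength `l`. -/
def cube (n : ℕ) (a : Fin n → ℝ) (l : ℝ) : Set (Fin n → ℝ) :=
  {x | ∀ i, a i ≤ x i ∧ x i ≤ a i + l}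

/-- The Carleson box `R_Q = Q × (0, ℓ(Q)]` over the cube `Q`. -/
def carlesonBox (n : ℕ) (a : Fin n → ℝ) (l : ℝ) : Set ((Fin n → ℝ) × ℝ) :=
  (cube n a l) ×ˢ Ioc (0 : ℝ) l

open scoped ENNReal

theorem ENNReal.one_add_mul_inv_one_sub (θ : ℝ≥0∞) : 1 + θ * (1 - θ)⁻¹ = (1 - θ)⁻¹ := by
  rw [← ENNReal.tsum_geometric_add_one, ← ENNReal.tsum_geometric,
    tsum_eq_zero_add' (f := fun n => θ ^ n) ENNReal.summable, pow_zero]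

section Subdivision

variable {X ι : Type*} [MeasurableSpace X] {μ : Measure X} {B : ι → Set X} {v : ι → ℝ≥0∞}
  {φ : X → ℝ≥0∞} {K θ : ℝ≥0∞}

/- Model: `B Q` is the Carleson box `R_Q`, `v Q = |Q|`, and `φ p = t ^ n` for a point `p` of
height `t`; `θ = 1 - η` and `K = C`. -/

theorem measure_inter_scale_gt_le (hφ : ∀ Q, ∀ p ∈ B Q, φ p ≤ v Q)
    (hdiv : ∀ Q, (B Q).Nonempty → ∃ Qs : ℕ → ι,
      ∑' i, v (Qs i) ≤ θ * v Q ∧ μ (B Q \ ⋃ i, B (Qs i)) ≤ K * v Q) (N : ℕ) (Q : ι) :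
    μ (B Q ∩ {p | θ ^ N * v Q < φ p}) ≤ K * (1 - θ)⁻¹ * v Q := by
  induction N generalizing Q with
  | zero =>
    have hempty : B Q ∩ {p | θ ^ 0 * v Q < φ p} = ∅ :=
      eq_empty_of_forall_notMem fun p ⟨hp, hlt⟩ => (hφ Q p hp).not_gt (by simpa using hlt)
    rw [hempty, measure_empty]
    exact zero_le
  | succ N ih =>
    rcases (B Q).eq_empty_or_nonempty with hQ | hQ
    · simp [hQ]
    obtain ⟨Qs, hsum, hrest⟩ := hdiv Q hQ
    have hcover : B Q ∩ {p | θ ^ (N + 1) * v Q < φ p} ⊆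
        (B Q \ ⋃ i, B (Qs i)) ∪ ⋃ i, B (Qs i) ∩ {p | θ ^ N * v (Qs i) < φ p} := by
      rintro p ⟨hpQ, hp⟩
      by_cases hpQs : p ∈ ⋃ i, B (Qs i)
      · obtain ⟨i, hpi⟩ := mem_iUnion.1 hpQs
        refine Or.inr (mem_iUnion.2 ⟨i, hpi, ?_⟩)
        calc θ ^ N * v (Qs i) ≤ θ ^ N * (θ * v Q) := by
              gcongr; exact (ENNReal.le_tsum i).trans hsum
          _ = θ ^ (N + 1) * v Q := by ring
          _ < φ p := hp
      · exact Or.inl ⟨hpQ, hpQs⟩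
    calc μ (B Q ∩ {p | θ ^ (N + 1) * v Q < φ p})
        ≤ μ (B Q \ ⋃ i, B (Qs i)) + ∑' i, μ (B (Qs i) ∩ {p | θ ^ N * v (Qs i) < φ p}) :=
          (measure_mono hcover).trans <|
            (measure_union_le _ _).trans (add_le_add le_rfl (measure_iUnion_le _))
      _ ≤ K * v Q + ∑' i, K * (1 - θ)⁻¹ * v (Qs i) := by gcongr with i; exact ih (Qs i)
      _ ≤ K * v Q + K * (1 - θ)⁻¹ * (θ * v Q) := by rw [ENNReal.tsum_mul_left]; gcongr
      _ = K * (1 + θ * (1 - θ)⁻¹) * v Q := by ring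
      _ = K * (1 - θ)⁻¹ * v Q := by rw [ENNReal.one_add_mul_inv_one_sub]

theorem measure_le_of_subdivision (hθ : θ < 1) (hv : ∀ Q, v Q ≠ ∞)
    (hφ_pos : ∀ Q, ∀ p ∈ B Q, 0 < φ p) (hφ : ∀ Q, ∀ p ∈ B Q, φ p ≤ v Q)
    (hdiv : ∀ Q, (B Q).Nonempty → ∃ Qs : ℕ → ι,
      ∑' i, v (Qs i) ≤ θ * v Q ∧ μ (B Q \ ⋃ i, B (Qs i)) ≤ K * v Q) (Q : ι) :
    μ (B Q) ≤ K * (1 - θ)⁻¹ * v Q := by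
  have hlevels : Filter.Tendsto (fun N : ℕ => θ ^ N * v Q) Filter.atTop (nhds 0) := by
    simpa using ENNReal.Tendsto.mul_const (ENNReal.tendsto_pow_atTop_nhds_zero_of_lt_one hθ)
      (Or.inr (hv Q))
  have hexhaust : B Q = ⋃ N : ℕ, B Q ∩ {p | θ ^ N * v Q < φ p} := by
    refine (iUnion_subset fun N => inter_subset_left).antisymm' fun p hp => ?_
    obtain ⟨N, hN⟩ := (hlevels.eventually (gt_mem_nhds (hφ_pos Q p hp))).exists
    exact mem_iUnion.2 ⟨N, hp, hN⟩
  have hmono : Monotone fun N : ℕ => B Q ∩ {p | θ ^ N * v Q < φ p} := fun N M hNM =>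
    inter_subset_inter_right _ fun p hp =>
      lt_of_le_of_lt (mul_le_mul_left (pow_le_pow_right_of_le_one' hθ.le hNM) _) hp
  rw [hexhaust, hmono.measure_iUnion]
  exact iSup_le fun N => measure_inter_scale_gt_le hφ hdiv N Q

end Subdivision

theorem cube_eq_pi (n : ℕ) (a : Fin n → ℝ) (l : ℝ) :
    cube n a l = Set.pi univ fun i => Icc (a i) (a i + l) := by
  ext x
  simp only [cube, mem_ofPred_eq, Set.mem_pi, mem_univ, forall_true_left, mem_Icc]

theorem volume_cube_lt_top (n : ℕ) (a : Fin n → ℝ) (l : ℝ) : volume (cube n a l) < ∞ := by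
  rw [cube_eq_pi]
  exact (isCompact_univ_pi fun _ => isCompact_Icc).measure_lt_top

theorem volume_cube {n : ℕ} (a : Fin n → ℝ) {l : ℝ} (hl : 0 ≤ l) :
    volume (cube n a l) = ENNReal.ofReal (l ^ n) := by
  rw [cube_eq_pi, volume_pi_pi]
  simp only [Real.volume_Icc, add_sub_cancel_left]
  rw [Finset.prod_const, ← ENNReal.ofReal_pow hl, Finset.card_univ, Fintype.card_fin]

theorem measurableSet_cube (n : ℕ) (a : Fin n → ℝ) (l : ℝ) : MeasurableSet (cube n a l) := by
  rw [cube_eq_pi]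
  exact MeasurableSet.univ_pi fun _ => measurableSet_Icc

theorem summable_pow_of_pairwise_disjoint_cube_subset {n : ℕ} {a : Fin n → ℝ} {l : ℝ}
    {c : ℕ → Fin n → ℝ} {s : ℕ → ℝ} (hs : ∀ i, 0 ≤ s i)
    (hsub : ∀ i, cube n (c i) (s i) ⊆ cube n a l)
    (hdisj : Pairwise fun i j => Disjoint (cube n (c i) (s i)) (cube n (c j) (s j))) :
    Summable fun i => s i ^ n := by
  have hfin : ∑' i, volume (cube n (c i) (s i)) ≠ ∞ := by
    rw [← measure_iUnion hdisj fun i => measurableSet_cube n (c i) (s i)]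
    exact ((measure_mono (iUnion_subset hsub)).trans_lt (volume_cube_lt_top n a l)).ne
  simpa [volume_cube _ (hs _), pow_nonneg (hs _)] using ENNReal.summable_toReal hfin

theorem tsum_ofReal_pow_le_of_pairwise_disjoint_cube_subset {n : ℕ} {a : Fin n → ℝ} {l t : ℝ}
    (hl : 0 ≤ l) {c : ℕ → Fin n → ℝ} {s : ℕ → ℝ} (hs : ∀ i, 0 ≤ s i)
    (hsub : ∀ i, cube n (c i) (s i) ⊆ cube n a l)
    (hdisj : Pairwise fun i j => Disjoint (cube n (c i) (s i)) (cube n (c j) (s j)))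
    (hsum : ∑' i, s i ^ n ≤ t * l ^ n) :
    ∑' i, ENNReal.ofReal (s i ^ n) ≤ ENNReal.ofReal t * ENNReal.ofReal (l ^ n) := by
  rw [← ENNReal.ofReal_mul' (pow_nonneg hl n), ← ENNReal.ofReal_tsum_of_nonneg
    (fun i => pow_nonneg (hs i) n) (summable_pow_of_pairwise_disjoint_cube_subset hs hsub hdisj)]
  exact ENNReal.ofReal_le_ofReal hsum

theorem carleson_via_subcubes_general (n : ℕ) (μ : Measure ((Fin n → ℝ) × ℝ))
    (C η : ℝ) (hη : η ∈ Ioo (0 : ℝ) 1)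
    (h : ∀ (a : Fin n → ℝ) (l : ℝ), 0 < l →
      ∃ (c : ℕ → (Fin n → ℝ)) (s : ℕ → ℝ),
        (∀ i, 0 ≤ s i) ∧
        (∀ i, cube n (c i) (s i) ⊆ cube n a l) ∧
        Pairwise (fun i j => Disjoint (cube n (c i) (s i)) (cube n (c j) (s j))) ∧
        (∑' i, (s i) ^ n) ≤ (1 - η) * l ^ n ∧
        μ (carlesonBox n a l \ ⋃ i, carlesonBox n (c i) (s i)) ≤ ENNReal.ofReal (C * l ^ n)) :
    ∀ (a : Fin n → ℝ) (l : ℝ), 0 < l →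
      μ (carlesonBox n a l) ≤ ENNReal.ofReal ((C / η) * l ^ n) := by
  obtain ⟨hη_pos, hη_lt⟩ := hη
  intro a l hl
  have hone_sub : 1 - ENNReal.ofReal (1 - η) = ENNReal.ofReal η := by
    rw [← ENNReal.ofReal_one, ← ENNReal.ofReal_sub _ (by linarith), sub_sub_cancel]
  have hbound := measure_le_of_subdivision (μ := μ) (B := fun Q => carlesonBox n Q.1 Q.2)
    (v := fun Q => ENNReal.ofReal (Q.2 ^ n)) (φ := fun p => ENNReal.ofReal (p.2 ^ n))
    (K := ENNReal.ofReal C) (θ := ENNReal.ofReal (1 - η))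
    (ENNReal.ofReal_lt_one.2 (by linarith)) (fun _ => ENNReal.ofReal_ne_top)
    (fun _ _ hp => ENNReal.ofReal_pos.2 (pow_pos hp.2.1 n))
    (fun _ _ hp => ENNReal.ofReal_le_ofReal (pow_le_pow_left₀ hp.2.1.le hp.2.2 n))
    (fun ⟨a, l⟩ ⟨p, hp⟩ => by
      have hl := hp.2.1.trans_le hp.2.2
      obtain ⟨c, s, hs, hsub, hdisj, hsum, hrest⟩ := h a l hl
      refine ⟨fun i => (c i, s i),
        tsum_ofReal_pow_le_of_pairwise_disjoint_cube_subset hl.le hs hsub hdisj hsum, ?_⟩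
      rwa [ENNReal.ofReal_mul' (pow_nonneg hl.le n)] at hrest) (a, l)
  rw [hone_sub] at hbound
  rwa [ENNReal.ofReal_mul' (pow_nonneg hl.le n), div_eq_mul_inv,
    ENNReal.ofReal_mul' (inv_nonneg.2 hη_pos.le), ENNReal.ofReal_inv_of_pos hη_pos]

/-- If for every cube `Q` one can find countably many pairwise disjoint subcubes `Q_i ⊆ Q`
with `∑ |Q_i| ≤ (1-η)|Q|` and `μ(R_Q \ ⋃ R_{Q_i}) ≤ C|Q|`, then `μ` is a Carleson measure
with Carleson norm at most `C/η`. -/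
theorem carleson_via_subcubes (n : ℕ) (μ : Measure ((Fin n → ℝ) × ℝ))
    (C η : ℝ) (hC : 0 < C) (hη : η ∈ Ioo (0 : ℝ) 1)
    (h : ∀ (a : Fin n → ℝ) (l : ℝ), 0 < l →
      ∃ (c : ℕ → (Fin n → ℝ)) (s : ℕ → ℝ),
        (∀ i, 0 ≤ s i) ∧
        (∀ i, cube n (c i) (s i) ⊆ cube n a l) ∧
        Pairwise (fun i j => Disjoint (cube n (c i) (s i)) (cube n (c j) (s j))) ∧
        (∑' i, (s i) ^ n) ≤ (1 - η) * l ^ n ∧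
        μ (carlesonBox n a l \ ⋃ i, carlesonBox n (c i) (s i)) ≤ ENNReal.ofReal (C * l ^ n)) :
    ∀ (a : Fin n → ℝ) (l : ℝ), 0 < l →
      μ (carlesonBox n a l) ≤ ENNReal.ofReal ((C / η) * l ^ n) :=
  carleson_via_subcubes_general n μ C η hη h
end

section
/- Let (V_t)_{t>0} and (Δ_s)_{s>0} be families of bounded operators on L²(ℝⁿ), with each Δ_s self-adjoint, satisfying the Calderón reproducing formula f = ∫₀^∞ Δ_s² f ds/s (convergence in L², in the sense that ⟨f,g⟩ = ∫₀^∞ ⟨Δ_s f, Δ_s g⟩ ds/s for all f,g), and the almost-orthogonality bound ‖V_t Δ_s‖_{op} ≤ C min(t/s, s/t)^α for some α > 0 and all s,t > 0. Then the square function estimate (∫₀^∞ ‖V_t f‖₂² dt/t)^{1/2} ≤ C' ‖f‖₂ holds for all f ∈ L²(ℝⁿ), with C' depending only on C and α. -/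
open MeasureTheory Set
open scoped InnerProductSpace ENNReal InnerProduct

/-!
By the reproducing formula and the self-adjointness of `Δ_s`,
`‖V_t f‖² = ⟪f, V_t* V_t f⟫ = ∫ ⟪V_t Δ_s (Δ_s f), V_t f⟫ ds/s`, hence
`‖V_t f‖ ≤ ∫ K(t,s) ‖Δ_s f‖ ds/s` with `K(t,s) = C min(t/s, s/t)^α`. Both marginals of `K`
against `ds/s` and `dt/t` are at most `2C/α`, so Schur's test (Cauchy–Schwarz in `s`, then
Tonelli) gives `∫ ‖V_t f‖² dt/t ≤ (2C/α)² ∫ ‖Δ_s f‖² ds/s = (2C/α)² ‖f‖²`.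
-/

lemma sq_lintegral_mul_le_lintegral_mul_lintegral {X : Type*} [MeasurableSpace X]
    {μ : Measure X} {K g : X → ℝ≥0∞} (hK : AEMeasurable K μ) (hg : AEMeasurable g μ) :
    (∫⁻ x, K x * g x ∂μ) ^ 2 ≤ (∫⁻ x, K x ∂μ) * ∫⁻ x, K x * g x ^ 2 ∂μ := by
  have hsplit : ∀ x, K x * g x = K x ^ (1 / 2 : ℝ) * (K x * g x ^ 2) ^ (1 / 2 : ℝ) := by
    intro x
    rw [← ENNReal.mul_rpow_of_nonneg _ _ (by norm_num), ← mul_assoc, ← pow_two, ← mul_pow,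
      ← ENNReal.rpow_natCast, ← ENNReal.rpow_mul]
    norm_num
  have holder := ENNReal.lintegral_mul_norm_pow_le hK (hK.mul (hg.pow_const 2))
    (p := 1 / 2) (q := 1 / 2) (by norm_num) (by norm_num) (by norm_num)
  calc (∫⁻ x, K x * g x ∂μ) ^ 2
      = (∫⁻ x, K x ^ (1 / 2 : ℝ) * (K x * g x ^ 2) ^ (1 / 2 : ℝ) ∂μ) ^ 2 := by
        simp_rw [← hsplit]
    _ ≤ ((∫⁻ x, K x ∂μ) ^ (1 / 2 : ℝ) * (∫⁻ x, K x * g x ^ 2 ∂μ) ^ (1 / 2 : ℝ)) ^ 2 := by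
        gcongr
        exact holder
    _ = (∫⁻ x, K x ∂μ) * ∫⁻ x, K x * g x ^ 2 ∂μ := by
        rw [mul_pow, ← ENNReal.rpow_natCast, ← ENNReal.rpow_natCast, ← ENNReal.rpow_mul,
          ← ENNReal.rpow_mul]
        norm_num

theorem lintegral_sq_le_of_schur_test {X Y : Type*} [MeasurableSpace X] [MeasurableSpace Y]
    {μ : Measure X} {ν : Measure Y} [SFinite μ] [SFinite ν] {K : X → Y → ℝ≥0∞}
    (hK : Measurable (Function.uncurry K)) {g : Y → ℝ≥0∞} (hg : AEMeasurable g ν)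
    {F : X → ℝ≥0∞} {A B : ℝ≥0∞} (hF : ∀ᵐ x ∂μ, F x ≤ ∫⁻ y, K x y * g y ∂ν)
    (hA : ∀ᵐ x ∂μ, ∫⁻ y, K x y ∂ν ≤ A) (hB : ∀ᵐ y ∂ν, ∫⁻ x, K x y ∂μ ≤ B) :
    ∫⁻ x, F x ^ 2 ∂μ ≤ A * B * ∫⁻ y, g y ^ 2 ∂ν := by
  have hprod : AEMeasurable (fun p : X × Y => K p.1 p.2 * g p.2 ^ 2) (μ.prod ν) :=
    hK.aemeasurable.mul ((hg.pow_const 2).comp_quasiMeasurePreserving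
      Measure.quasiMeasurePreserving_snd)
  calc ∫⁻ x, F x ^ 2 ∂μ
      ≤ ∫⁻ x, (∫⁻ y, K x y ∂ν) * ∫⁻ y, K x y * g y ^ 2 ∂ν ∂μ :=
        lintegral_mono_ae <| hF.mono fun x hx => (pow_le_pow_left' hx 2).trans
          (sq_lintegral_mul_le_lintegral_mul_lintegral hK.of_uncurry_left.aemeasurable hg)
    _ ≤ ∫⁻ x, A * ∫⁻ y, K x y * g y ^ 2 ∂ν ∂μ := by
        refine lintegral_mono_ae ?_
        filter_upwards [hA] with x hx
        gcongr
    _ = A * ∫⁻ y, (∫⁻ x, K x y ∂μ) * g y ^ 2 ∂ν := by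
        rw [lintegral_const_mul'' _ hprod.lintegral_prod_right', lintegral_lintegral_swap hprod]
        exact congrArg _ (lintegral_congr fun y =>
          lintegral_mul_const (g y ^ 2) hK.of_uncurry_right)
    _ ≤ A * B * ∫⁻ y, g y ^ 2 ∂ν := by
        rw [mul_assoc, ← lintegral_const_mul'' _ (hg.pow_const 2)]
        gcongr A * ?_
        refine lintegral_mono_ae ?_
        filter_upwards [hB] with y hy
        gcongr

section Reproducing

variable {𝕜 E ι : Type*} [RCLike 𝕜] [NormedAddCommGroup E] [InnerProductSpace 𝕜 E]
  [MeasurableSpace ι] {μ : Measure ι}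

lemma enorm_inner_le_enorm_mul_enorm (x y : E) : ‖⟪x, y⟫_𝕜‖ₑ ≤ ‖x‖ₑ * ‖y‖ₑ := by
  simp only [enorm, ← ENNReal.coe_mul, ENNReal.coe_le_coe]
  exact nnnorm_inner_le_nnnorm x y

lemma enorm_inner_self (x : E) : ‖⟪x, x⟫_𝕜‖ₑ = ‖x‖ₑ ^ 2 := by
  rw [inner_self_eq_norm_sq_to_K, enorm_pow, ← ofReal_norm, ← ofReal_norm, RCLike.norm_ofReal,
    abs_norm]

theorem enorm_apply_le_lintegral_of_reproducing [CompleteSpace E] {Δ : ι → E →L[𝕜] E}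
    (hΔ : ∀ᵐ s ∂μ, IsSelfAdjoint (Δ s))
    (hrep : ∀ f g : E, ⟪f, g⟫_𝕜 = ∫ s, ⟪Δ s f, Δ s g⟫_𝕜 ∂μ) (T : E →L[𝕜] E) (f : E) :
    ‖T f‖ₑ ≤ ∫⁻ s, ‖T ∘L Δ s‖ₑ * ‖Δ s f‖ₑ ∂μ := by
  set I := ∫⁻ s, ‖T ∘L Δ s‖ₑ * ‖Δ s f‖ₑ ∂μ
  have hpointwise : ∀ᵐ s ∂μ,
      ‖⟪Δ s f, Δ s ((T†) (T f))⟫_𝕜‖ₑ ≤ ‖T ∘L Δ s‖ₑ * ‖Δ s f‖ₑ * ‖T f‖ₑ := by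
    filter_upwards [hΔ] with s hs
    rw [← ContinuousLinearMap.adjoint_inner_left, ContinuousLinearMap.adjoint_inner_right,
      hs.adjoint_eq]
    exact (enorm_inner_le_enorm_mul_enorm _ _).trans
      (by gcongr; exact (T ∘L Δ s).le_opENorm (Δ s f))
  have key : ‖T f‖ₑ * ‖T f‖ₑ ≤ I * ‖T f‖ₑ :=
    calc ‖T f‖ₑ * ‖T f‖ₑ = ‖⟪f, (T†) (T f)⟫_𝕜‖ₑ := by
          rw [ContinuousLinearMap.adjoint_inner_right, enorm_inner_self, pow_two]
      _ = ‖∫ s, ⟪Δ s f, Δ s ((T†) (T f))⟫_𝕜 ∂μ‖ₑ := by rw [hrep]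
      _ ≤ ∫⁻ s, ‖⟪Δ s f, Δ s ((T†) (T f))⟫_𝕜‖ₑ ∂μ := enorm_integral_le_lintegral_enorm _
      _ ≤ ∫⁻ s, ‖T ∘L Δ s‖ₑ * ‖Δ s f‖ₑ * ‖T f‖ₑ ∂μ := lintegral_mono_ae hpointwise
      _ = I * ‖T f‖ₑ := lintegral_mul_const' _ _ enorm_ne_top
  rcases eq_or_ne ‖T f‖ₑ 0 with h0 | h0
  · simp [h0]
  · exact (ENNReal.mul_le_mul_iff_left h0 enorm_ne_top).1 key

theorem lintegral_enorm_sq_eq_of_integral_inner_self {x : ι → E} {y : E}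
    (hint : Integrable (fun s => ⟪x s, x s⟫_𝕜) μ) (hrep : ⟪y, y⟫_𝕜 = ∫ s, ⟪x s, x s⟫_𝕜 ∂μ) :
    ∫⁻ s, ‖x s‖ₑ ^ 2 ∂μ = ‖y‖ₑ ^ 2 := by
  calc ∫⁻ s, ‖x s‖ₑ ^ 2 ∂μ = ∫⁻ s, ‖⟪x s, x s⟫_𝕜‖ₑ ∂μ := by simp_rw [enorm_inner_self]
    _ = ENNReal.ofReal (∫ s, RCLike.re ⟪x s, x s⟫_𝕜 ∂μ) := by
        simp_rw [← ofReal_integral_norm_eq_lintegral_enorm hint, inner_self_re_eq_norm]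
    _ = ‖y‖ₑ ^ 2 := by
        rw [integral_re hint, ← hrep, inner_self_re_eq_norm, ofReal_norm, enorm_inner_self]

theorem aemeasurable_enorm_of_integrable_inner_self {x : ι → E}
    (hint : Integrable (fun s => ⟪x s, x s⟫_𝕜) μ) : AEMeasurable (fun s => ‖x s‖ₑ) μ := by
  simp_rw [← ofReal_norm, norm_eq_sqrt_re_inner (𝕜 := 𝕜)]
  exact hint.aestronglyMeasurable.aemeasurable.re.sqrt.ennreal_ofReal

theorem lintegral_enorm_sq_le_of_reproducing [CompleteSpace E] [SFinite μ]
    {Δ V : ι → E →L[𝕜] E} {K : ι → ι → ℝ≥0∞} {A B : ℝ≥0∞} {f : E}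
    (hK : Measurable (Function.uncurry K)) (hΔ : ∀ᵐ s ∂μ, IsSelfAdjoint (Δ s))
    (hint : Integrable (fun s => ⟪Δ s f, Δ s f⟫_𝕜) μ)
    (hrep : ∀ f g : E, ⟪f, g⟫_𝕜 = ∫ s, ⟪Δ s f, Δ s g⟫_𝕜 ∂μ)
    (hVΔ : ∀ᵐ t ∂μ, ∀ᵐ s ∂μ, ‖V t ∘L Δ s‖ₑ ≤ K t s)
    (hA : ∀ᵐ t ∂μ, ∫⁻ s, K t s ∂μ ≤ A) (hB : ∀ᵐ s ∂μ, ∫⁻ t, K t s ∂μ ≤ B) :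
    ∫⁻ t, ‖V t f‖ₑ ^ 2 ∂μ ≤ A * B * ‖f‖ₑ ^ 2 := by
  refine (lintegral_sq_le_of_schur_test hK (aemeasurable_enorm_of_integrable_inner_self hint) ?_
    hA hB).trans_eq (by rw [lintegral_enorm_sq_eq_of_integral_inner_self hint (hrep f f)])
  filter_upwards [hVΔ] with t ht
  exact (enorm_apply_le_lintegral_of_reproducing hΔ hrep (V t) f).trans
    (lintegral_mono_ae (ht.mono fun s hs => by gcongr))

end Reproducing

lemma lintegral_Ioc_inv_mul_div_rpow {α t : ℝ} (hα : 0 < α) (ht : 0 < t) :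
    ∫⁻ s in Ioc 0 t, ENNReal.ofReal (s⁻¹ * (s / t) ^ α) = ENNReal.ofReal α⁻¹ := by
  have hcongr : EqOn (fun s => s⁻¹ * (s / t) ^ α) (fun s => t ^ (-α) * s ^ (α - 1)) (Ioc 0 t) := by
    intro s hs
    dsimp only
    rw [Real.div_rpow hs.1.le ht.le, Real.rpow_sub_one hs.1.ne', Real.rpow_neg ht.le]
    ring
  have hint : IntegrableOn (fun s => t ^ (-α) * s ^ (α - 1)) (Ioc 0 t) := by
    have := intervalIntegral.intervalIntegrable_rpow' (a := 0) (b := t) (r := α - 1) (by linarith)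
    exact ((intervalIntegrable_iff_integrableOn_Ioc_of_le ht.le).1 this).const_mul _
  rw [setLIntegral_congr_fun measurableSet_Ioc fun s hs => congrArg ENNReal.ofReal (hcongr hs),
    ← ofReal_integral_eq_lintegral_ofReal hint
      ((ae_restrict_mem measurableSet_Ioc).mono fun s hs => by positivity [hs.1]),
    integral_const_mul, ← intervalIntegral.integral_of_le ht.le,
    integral_rpow (Or.inl (by linarith)), sub_add_cancel, Real.zero_rpow hα.ne', sub_zero,
    mul_div_assoc', ← Real.rpow_add ht, neg_add_cancel, Real.rpow_zero, one_div]

lemma lintegral_Ioi_inv_mul_div_rpow {α t : ℝ} (hα : 0 < α) (ht : 0 < t) :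
    ∫⁻ s in Ioi t, ENNReal.ofReal (s⁻¹ * (t / s) ^ α) = ENNReal.ofReal α⁻¹ := by
  have hcongr : EqOn (fun s => s⁻¹ * (t / s) ^ α) (fun s => t ^ α * s ^ (-α - 1)) (Ioi t) := by
    intro s hs
    have hs0 : 0 < s := ht.trans hs
    dsimp only
    rw [Real.div_rpow ht.le hs0.le, Real.rpow_sub_one hs0.ne', Real.rpow_neg hs0.le]
    field_simp
  have hint : IntegrableOn (fun s => t ^ α * s ^ (-α - 1)) (Ioi t) :=
    (integrableOn_Ioi_rpow_of_lt (by linarith) ht).const_mul _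
  rw [setLIntegral_congr_fun measurableSet_Ioi fun s hs => congrArg ENNReal.ofReal (hcongr hs),
    ← ofReal_integral_eq_lintegral_ofReal hint
      ((ae_restrict_mem measurableSet_Ioi).mono fun s hs => by positivity [ht.trans hs]),
    integral_const_mul, integral_Ioi_rpow_of_lt (by linarith) ht, sub_add_cancel,
    mul_div_assoc', mul_neg, neg_div_neg_eq, ← Real.rpow_add ht, add_neg_cancel, Real.rpow_zero,
    one_div]

/-- The measure `dt / t` on `(0, ∞)`, as a measure on `ℝ`. -/
noncomputable def mulHaarIoi : Measure ℝ :=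
  (volume.restrict (Ioi 0)).withDensity fun t => ENNReal.ofReal t⁻¹

instance : SFinite mulHaarIoi := by
  unfold mulHaarIoi
  infer_instance

lemma lintegral_mulHaarIoi (F : ℝ → ℝ≥0∞) :
    ∫⁻ t, F t ∂mulHaarIoi = ∫⁻ t in Ioi 0, ENNReal.ofReal t⁻¹ * F t :=
  lintegral_withDensity_eq_lintegral_mul_non_measurable _
    (by fun_prop) (ae_of_all _ fun _ => ENNReal.ofReal_lt_top) F

lemma integral_mulHaarIoi {E : Type*} [NormedAddCommGroup E] [NormedSpace ℝ E] (F : ℝ → E) :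
    ∫ t, F t ∂mulHaarIoi = ∫ t in Ioi 0, t⁻¹ • F t := by
  rw [mulHaarIoi, integral_withDensity_eq_integral_toReal_smul
    (by fun_prop) (ae_of_all _ fun _ => ENNReal.ofReal_lt_top)]
  refine setIntegral_congr_fun measurableSet_Ioi fun t ht => ?_
  rw [ENNReal.toReal_ofReal (inv_nonneg.2 (le_of_lt ht))]

lemma integrable_mulHaarIoi_iff {E : Type*} [NormedAddCommGroup E] [NormedSpace ℝ E]
    {F : ℝ → E} : Integrable F mulHaarIoi ↔ IntegrableOn (fun t => t⁻¹ • F t) (Ioi 0) := by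
  rw [mulHaarIoi, integrable_withDensity_iff_integrable_smul'
    (by fun_prop) (ae_of_all _ fun _ => ENNReal.ofReal_lt_top)]
  refine integrable_congr ((ae_restrict_mem measurableSet_Ioi).mono fun t ht => ?_)
  dsimp only
  rw [ENNReal.toReal_ofReal (inv_nonneg.2 (le_of_lt ht))]

lemma lintegral_ofReal_mulHaarIoi (f : ℝ → ℝ) :
    ∫⁻ t, ENNReal.ofReal (f t) ∂mulHaarIoi = ∫⁻ t in Ioi 0, ENNReal.ofReal (f t / t) := by
  rw [lintegral_mulHaarIoi]
  refine setLIntegral_congr_fun measurableSet_Ioi fun t ht => ?_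
  rw [← ENNReal.ofReal_mul (inv_nonneg.2 (le_of_lt ht)), div_eq_inv_mul]

lemma ae_mulHaarIoi_pos : ∀ᵐ t ∂mulHaarIoi, 0 < t :=
  withDensity_absolutelyContinuous _ _ (ae_restrict_mem measurableSet_Ioi)

lemma lintegral_mul_min_div_rpow_mulHaarIoi {C α t : ℝ} (hC : 0 ≤ C) (hα : 0 < α) (ht : 0 < t) :
    ∫⁻ s, ENNReal.ofReal (C * min (t / s) (s / t) ^ α) ∂mulHaarIoi =
      ENNReal.ofReal (2 * C / α) := by
  simp_rw [ENNReal.ofReal_mul hC]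
  rw [lintegral_const_mul' _ _ ENNReal.ofReal_ne_top, lintegral_mulHaarIoi, ← Ioc_union_Ioi_eq_Ioi ht.le,
    lintegral_union measurableSet_Ioi (Ioc_disjoint_Ioi le_rfl)]
  have hsmall : ∀ s ∈ Ioc 0 t, ENNReal.ofReal s⁻¹ * ENNReal.ofReal (min (t / s) (s / t) ^ α)
      = ENNReal.ofReal (s⁻¹ * (s / t) ^ α) := fun s ⟨hs, hst⟩ => by
    rw [min_eq_right (((div_le_one ht).2 hst).trans ((one_le_div hs).2 hst)),
      ← ENNReal.ofReal_mul (inv_nonneg.2 hs.le)]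
  have hlarge : ∀ s ∈ Ioi t, ENNReal.ofReal s⁻¹ * ENNReal.ofReal (min (t / s) (s / t) ^ α)
      = ENNReal.ofReal (s⁻¹ * (t / s) ^ α) := fun s (hts : t < s) => by
    have hs : 0 < s := ht.trans hts
    rw [min_eq_left (((div_le_one hs).2 hts.le).trans ((one_le_div ht).2 hts.le)),
      ← ENNReal.ofReal_mul (inv_nonneg.2 hs.le)]
  rw [setLIntegral_congr_fun measurableSet_Ioc hsmall,
    setLIntegral_congr_fun measurableSet_Ioi hlarge,
    lintegral_Ioc_inv_mul_div_rpow hα ht, lintegral_Ioi_inv_mul_div_rpow hα ht,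
    ← ENNReal.ofReal_add (by positivity) (by positivity), ← ENNReal.ofReal_mul hC]
  congr 1
  ring

/-- Schur-lemma square function estimate on `L²(ℝⁿ)`: if `(Δ_s)` are self-adjoint, satisfy the
Calderón reproducing formula `⟨f,g⟩ = ∫₀^∞ ⟨Δ_s f, Δ_s g⟩ ds/s`, and the almost-orthogonality
bound `‖V_t Δ_s‖ ≤ C min(t/s, s/t)^α` holds, then `∫₀^∞ ‖V_t f‖₂² dt/t ≤ C'² ‖f‖₂²` with `C'`
depending only on `C` and `α`. -/
theorem square_function_estimate_of_almost_orthogonality (C α : ℝ) (hC : 0 < C) (hα : 0 < α) :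
    ∃ C' : ℝ, 0 < C' ∧
      ∀ (n : ℕ)
        (Δ V : ℝ → Lp ℂ 2 (volume : Measure (Fin n → ℝ)) →L[ℂ]
          Lp ℂ 2 (volume : Measure (Fin n → ℝ))),
        (∀ s, 0 < s → IsSelfAdjoint (Δ s)) →
        (∀ f g : Lp ℂ 2 (volume : Measure (Fin n → ℝ)),
          IntegrableOn (fun s : ℝ => ⟪Δ s f, Δ s g⟫_ℂ / (s : ℂ)) (Ioi (0 : ℝ)) volume) →
        (∀ f g : Lp ℂ 2 (volume : Measure (Fin n → ℝ)),
          ⟪f, g⟫_ℂ = ∫ s in Ioi (0 : ℝ), ⟪Δ s f, Δ s g⟫_ℂ / (s : ℂ)) →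
        (∀ s t : ℝ, 0 < s → 0 < t →
          ‖(V t).comp (Δ s)‖ ≤ C * Real.rpow (min (t / s) (s / t)) α) →
        ∀ f : Lp ℂ 2 (volume : Measure (Fin n → ℝ)),
          ∫⁻ t in Ioi (0 : ℝ), ENNReal.ofReal (‖V t f‖ ^ 2 / t) ≤
            ENNReal.ofReal (C' * ‖f‖ ^ 2) := by
  refine ⟨(2 * C / α) ^ 2, by positivity, fun n Δ V hΔ hint hcal hbound f => ?_⟩
  have hsmul : ∀ (s : ℝ) (z : ℂ), s⁻¹ • z = z / s := fun s z => by
    rw [Complex.real_smul, Complex.ofReal_inv, div_eq_inv_mul]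
  have hrep : ∀ f g, ⟪f, g⟫_ℂ = ∫ s, ⟪Δ s f, Δ s g⟫_ℂ ∂mulHaarIoi := fun f g => by
    simpa only [integral_mulHaarIoi, hsmul] using hcal f g
  have hKint : ∀ t, 0 < t →
      ∫⁻ s, ENNReal.ofReal (C * min (t / s) (s / t) ^ α) ∂mulHaarIoi ≤ ENNReal.ofReal (2 * C / α) :=
    fun t ht => (lintegral_mul_min_div_rpow_mulHaarIoi hC.le hα ht).le
  have hsquare := lintegral_enorm_sq_le_of_reproducing
    (K := fun t s => ENNReal.ofReal (C * min (t / s) (s / t) ^ α)) (by fun_prop)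
    (ae_mulHaarIoi_pos.mono hΔ)
    (by simpa only [integrable_mulHaarIoi_iff, hsmul] using hint f f) hrep
    (ae_mulHaarIoi_pos.mono fun t ht => ae_mulHaarIoi_pos.mono fun s hs =>
      (ofReal_norm _).symm.trans_le (ENNReal.ofReal_le_ofReal (hbound s t hs ht)))
    (ae_mulHaarIoi_pos.mono hKint)
    (ae_mulHaarIoi_pos.mono fun s hs => by simpa only [min_comm] using hKint s hs)
  calc ∫⁻ t in Ioi 0, ENNReal.ofReal (‖V t f‖ ^ 2 / t)
      = ∫⁻ t, ‖V t f‖ₑ ^ 2 ∂mulHaarIoi := by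
        simp_rw [← lintegral_ofReal_mulHaarIoi, ENNReal.ofReal_pow (norm_nonneg _), ofReal_norm]
    _ ≤ ENNReal.ofReal (2 * C / α) * ENNReal.ofReal (2 * C / α) * ‖f‖ₑ ^ 2 := hsquare
    _ = ENNReal.ofReal ((2 * C / α) ^ 2 * ‖f‖ ^ 2) := by
        rw [← ofReal_norm, ← ENNReal.ofReal_pow (norm_nonneg _),
          ← ENNReal.ofReal_mul (by positivity), ← ENNReal.ofReal_mul (by positivity), ← sq]
end

section
/- Let c_n = b_n 2ⁿ/(1+2ⁿ) where b_n = i/(πn) for n ≠ 0, b_0 = 0. Then the function ĉ(θ) = ∑_{n∈ℤ} c_n e^{inθ} is not essentially bounded on [0,2π]; in fact ĉ(θ) ∼ −(i/π) ln|sin(θ/2)| as θ → 0, so ĉ ∉ L^∞. -/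
/-!
Pairing the terms `m = ±k`, `c_k w^k + c_{-k} w^{-k} = (i/π) (w^k/k - r_k(w))` with
`|r_k(w)| ≤ 2^{1-k}` on the unit circle. Hence for `|w| = 1`, `w ≠ 1`, the symmetric partial sums
converge to `(i/π) (-log (1 - w) - ∑ r_k(w))`; the boundary value of the logarithmic series comes
from Dirichlet's test and Abel's theorem. For `w = e^{iθ}` we have `|1 - w| = 2 sin (θ/2)`, so
`ĉ(θ)` differs from `-(i/π) log sin (θ/2)` by a bounded amount, while the latter blows up as
`θ → 0⁺`.
-/

open Filter Set

/-- The coefficient sequence `c_n = b_n 2ⁿ/(1+2ⁿ)` with `b_n = i/(πn)` for `n ≠ 0`, `b_0 = 0`. -/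
noncomputable def cSeq (m : ℤ) : ℂ :=
  if m = 0 then 0 else (Complex.I / (Real.pi * m)) * ((2 : ℂ) ^ m / (1 + (2 : ℂ) ^ m))

open Topology Asymptotics

theorem sum_Icc_neg_eq_sum_range {M : Type*} [AddCommMonoid M] (F : ℤ → M) (h0 : F 0 = 0)
    (N : ℕ) :
    ∑ m ∈ Finset.Icc (-(N : ℤ)) N, F m = ∑ n ∈ Finset.range N, (F (n + 1) + F (-(n + 1))) := by
  induction N with
  | zero => simpa using h0
  | succ N ih =>
    have hIcc : Finset.Icc (-((N : ℤ) + 1)) (N + 1)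
        = insert (-((N : ℤ) + 1)) (insert ((N : ℤ) + 1) (Finset.Icc (-(N : ℤ)) N)) := by
      ext m; simp only [Finset.mem_Icc, Finset.mem_insert]; omega
    have hneg : -((N : ℤ) + 1) ∉ insert ((N : ℤ) + 1) (Finset.Icc (-(N : ℤ)) N) := by
      simp only [Finset.mem_Icc, Finset.mem_insert]; omega
    have hpos : (N : ℤ) + 1 ∉ Finset.Icc (-(N : ℤ)) N := by simp
    push_cast
    rw [hIcc, Finset.sum_insert hneg, Finset.sum_insert hpos, ih, Finset.sum_range_succ]
    abel

theorem norm_geom_sum_le {K : Type*} [NormedDivisionRing K] {w : K} (hw : ‖w‖ ≤ 1) (hw1 : w ≠ 1)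
    (n : ℕ) : ‖∑ i ∈ Finset.range n, w ^ i‖ ≤ 2 / ‖1 - w‖ := by
  rw [geom_sum_eq hw1, norm_div, norm_sub_rev w]
  gcongr
  calc ‖w ^ n - 1‖ ≤ ‖w‖ ^ n + ‖(1 : K)‖ := by rw [← norm_pow]; exact norm_sub_le _ _
    _ ≤ 2 := by rw [norm_one]; linarith [pow_le_one₀ (norm_nonneg w) hw (n := n)]

theorem cauchySeq_sum_range_pow_succ_div {w : ℂ} (hw : ‖w‖ = 1) (hw1 : w ≠ 1) :
    CauchySeq fun N ↦ ∑ n ∈ Finset.range N, w ^ (n + 1) / (n + 1) := by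
  have hanti : Antitone fun n : ℕ ↦ 1 / ((n : ℝ) + 1) := fun a b hab ↦
    one_div_le_one_div_of_le (by positivity) (by gcongr)
  have hbound (N : ℕ) : ‖∑ n ∈ Finset.range N, w ^ (n + 1)‖ ≤ 2 / ‖1 - w‖ := by
    simp_rw [pow_succ', ← Finset.mul_sum, norm_mul, hw, one_mul]
    exact norm_geom_sum_le hw.le hw1 N
  convert hanti.cauchySeq_series_mul_of_tendsto_zero_of_bounded
    tendsto_one_div_add_atTop_nhds_zero_nat hbound using 3 with N n
  rw [Complex.real_smul]
  push_cast
  ring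

theorem one_sub_mem_slitPlane {w : ℂ} (hw : ‖w‖ = 1) (hw1 : w ≠ 1) :
    1 - w ∈ Complex.slitPlane := by
  rw [Complex.mem_slitPlane_iff]
  by_contra! h
  obtain ⟨hre, him⟩ : 1 ≤ w.re ∧ w.im = 0 := by simpa using h
  have hnorm : w.re * w.re + w.im * w.im = 1 := by
    rw [← Complex.normSq_apply, ← Complex.sq_norm, hw, one_pow]
  exact hw1 (Complex.ext (by rw [him, Complex.one_re] at *; nlinarith) (by simpa using him))

theorem tendsto_sum_range_pow_div_neg_log {w : ℂ} (hw : ‖w‖ = 1) (hw1 : w ≠ 1) :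
    Tendsto (fun N ↦ ∑ n ∈ Finset.range N, w ^ n / n) atTop (𝓝 (-Complex.log (1 - w))) := by
  obtain ⟨l, hl⟩ := cauchySeq_tendsto_of_complete (cauchySeq_sum_range_pow_succ_div hw hw1)
  replace hl : Tendsto (fun N ↦ ∑ n ∈ Finset.range N, w ^ n / n) atTop (𝓝 l) := by
    rw [← tendsto_add_atTop_iff_nat 1]
    simpa [Finset.sum_range_succ'] using hl
  suffices l = -Complex.log (1 - w) by rwa [← this]
  -- Abel's theorem identifies the boundary value with the limit of `-log (1 - x w)` as `x → 1⁻`.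
  have habel := Complex.tendsto_tsum_powerSeries_nhdsWithin_lt hl
  have hlog : Tendsto (fun z : ℂ ↦ -Complex.log (1 - z * w)) ((𝓝[<] (1 : ℝ)).map (↑))
      (𝓝 (-Complex.log (1 - w))) := by
    have hcont : ContinuousAt (fun z : ℂ ↦ -Complex.log (1 - z * w)) 1 := by
      refine (ContinuousAt.clog ?_ ?_).neg
      · fun_prop
      · simpa using one_sub_mem_slitPlane hw hw1
    have hmap : Tendsto ((↑) : ℝ → ℂ) (𝓝[<] 1) (𝓝 1) := by
      simpa using (Complex.continuous_ofReal.tendsto 1).mono_left nhdsWithin_le_nhds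
    simpa using hcont.tendsto.mono_left hmap
  refine tendsto_nhds_unique habel (hlog.congr' ?_)
  rw [EventuallyEq, eventually_map]
  filter_upwards [Ioo_mem_nhdsLT (show (0 : ℝ) < 1 by norm_num)] with x hx
  have hxw : ‖(x : ℂ) * w‖ < 1 := by
    rw [norm_mul, hw, mul_one, Complex.norm_real, Real.norm_of_nonneg hx.1.le]
    exact hx.2
  rw [← (Complex.hasSum_taylorSeries_neg_log hxw).tsum_eq]
  exact tsum_congr fun n ↦ by ring

noncomputable def cSeqRemainder (w : ℂ) (n : ℕ) : ℂ :=
  (w ^ (n + 1) + (w ^ (n + 1))⁻¹) / ((n + 1) * (1 + 2 ^ (n + 1)))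

theorem cSeq_mul_zpow_add_cSeq_neg_mul_zpow (w : ℂ) (n : ℕ) :
    cSeq (n + 1) * w ^ ((n : ℤ) + 1) + cSeq (-(n + 1)) * w ^ (-((n : ℤ) + 1))
      = Complex.I / Real.pi * (w ^ (n + 1) / (n + 1) - cSeqRemainder w n) := by
  have hcast : (n : ℤ) + 1 = ((n + 1 : ℕ) : ℤ) := by push_cast; ring
  have hpos : (1 : ℂ) + 2 ^ (n + 1) ≠ 0 := by
    exact_mod_cast (by positivity : (1 : ℝ) + 2 ^ (n + 1) ≠ 0)
  have hn : (n : ℂ) + 1 ≠ 0 := by exact_mod_cast n.succ_ne_zero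
  have hπ : (Real.pi : ℂ) ≠ 0 := by exact_mod_cast Real.pi_ne_zero
  rw [hcast, cSeq, cSeq, if_neg (by omega), if_neg (by omega), zpow_neg, zpow_natCast, zpow_neg,
    zpow_natCast, cSeqRemainder]
  push_cast
  have hP : (2 : ℂ) ^ (n + 1) ≠ 0 := pow_ne_zero _ two_ne_zero
  have hflip : ((2 : ℂ) ^ (n + 1))⁻¹ / (1 + ((2 : ℂ) ^ (n + 1))⁻¹) = 1 / (1 + 2 ^ (n + 1)) := by
    rw [show 1 + ((2 : ℂ) ^ (n + 1))⁻¹ = (1 + 2 ^ (n + 1)) / 2 ^ (n + 1) by field_simp; ring,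
      div_div_eq_mul_div, inv_mul_cancel₀ hP]
  rw [hflip]
  generalize w ^ (n + 1) = x
  generalize x⁻¹ = y
  field_simp
  ring

theorem norm_cSeqRemainder_le {w : ℂ} (hw : ‖w‖ = 1) (n : ℕ) :
    ‖cSeqRemainder w n‖ ≤ (1 / 2) ^ n := by
  have hnum : ‖w ^ (n + 1) + (w ^ (n + 1))⁻¹‖ ≤ 2 := by
    calc _ ≤ ‖w ^ (n + 1)‖ + ‖(w ^ (n + 1))⁻¹‖ := norm_add_le _ _
      _ = 2 := by rw [norm_inv, norm_pow, hw]; norm_num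
  have hden : (2 : ℝ) ^ (n + 1) ≤ ‖((n : ℂ) + 1) * (1 + 2 ^ (n + 1))‖ := by
    rw [norm_mul, show ((n : ℂ) + 1) = ((n + 1 : ℕ) : ℂ) by push_cast; ring,
      show (1 : ℂ) + 2 ^ (n + 1) = ((1 + 2 ^ (n + 1) : ℕ) : ℂ) by push_cast; ring,
      Complex.norm_natCast, Complex.norm_natCast]
    push_cast
    nlinarith [pow_pos (two_pos (α := ℝ)) (n + 1), (n.cast_nonneg : (0 : ℝ) ≤ n)]
  calc ‖cSeqRemainder w n‖ ≤ 2 / 2 ^ (n + 1) := by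
        rw [cSeqRemainder, norm_div]; gcongr
    _ = (1 / 2) ^ n := by rw [pow_succ, one_div_pow]; field_simp

theorem norm_tsum_cSeqRemainder_le {w : ℂ} (hw : ‖w‖ = 1) :
    ‖∑' n, cSeqRemainder w n‖ ≤ 2 :=
  tsum_of_norm_bounded hasSum_geometric_two (norm_cSeqRemainder_le hw)

theorem tendsto_sum_cSeq_mul_zpow {w : ℂ} (hw : ‖w‖ = 1) (hw1 : w ≠ 1) :
    Tendsto (fun N : ℕ ↦ ∑ m ∈ Finset.Icc (-(N : ℤ)) N, cSeq m * w ^ m) atTop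
      (𝓝 (Complex.I / Real.pi * (-Complex.log (1 - w) - ∑' n, cSeqRemainder w n))) := by
  have hpartial (N : ℕ) : ∑ m ∈ Finset.Icc (-(N : ℤ)) N, cSeq m * w ^ m
      = Complex.I / Real.pi * (∑ n ∈ Finset.range (N + 1), w ^ n / n
          - ∑ n ∈ Finset.range N, cSeqRemainder w n) := by
    rw [sum_Icc_neg_eq_sum_range _ (by simp [cSeq]),
      Finset.sum_congr rfl fun n _ ↦ cSeq_mul_zpow_add_cSeq_neg_mul_zpow w n, ← Finset.mul_sum,
      Finset.sum_sub_distrib, Finset.sum_range_succ' fun n ↦ w ^ n / n]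
    push_cast
    simp
  have hremainder : Summable (cSeqRemainder w) :=
    summable_geometric_two.of_norm_bounded (norm_cSeqRemainder_le hw)
  refine (((tendsto_sum_range_pow_div_neg_log hw hw1).comp (tendsto_add_atTop_nat 1)).sub
    hremainder.hasSum.tendsto_sum_nat).const_mul _ |>.congr fun N ↦ (hpartial N).symm

theorem sin_half_pos {θ : ℝ} (hθ : θ ∈ Ioo 0 (2 * Real.pi)) : 0 < Real.sin (θ / 2) :=
  Real.sin_pos_of_pos_of_lt_pi (by linarith [hθ.1]) (by linarith [hθ.2])

theorem norm_one_sub_exp_mul_I {θ : ℝ} (hθ : θ ∈ Ioo 0 (2 * Real.pi)) :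
    ‖1 - Complex.exp (θ * Complex.I)‖ = 2 * Real.sin (θ / 2) := by
  rw [norm_sub_rev, mul_comm, Complex.norm_exp_I_mul_ofReal_sub_one,
    Real.norm_of_nonneg (mul_pos two_pos (sin_half_pos hθ)).le]

theorem norm_sub_log_sin_half_le {θ : ℝ} (hθ : θ ∈ Ioo 0 (2 * Real.pi)) {G : ℂ}
    (hG : Tendsto (fun N : ℕ ↦
        ∑ m ∈ Finset.Icc (-(N : ℤ)) N, cSeq m * Complex.exp (m * θ * Complex.I)) atTop (𝓝 G)) :
    ‖G - -(Complex.I / Real.pi) * (Real.log |Real.sin (θ / 2)| : ℂ)‖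
      ≤ (Real.log 2 + Real.pi + 2) / Real.pi := by
  set w := Complex.exp (θ * Complex.I)
  have hw : ‖w‖ = 1 := Complex.norm_exp_ofReal_mul_I θ
  have hsin := sin_half_pos hθ
  have hnorm : ‖1 - w‖ = 2 * Real.sin (θ / 2) := norm_one_sub_exp_mul_I hθ
  have hw1 : w ≠ 1 := by
    rintro h
    rw [h, sub_self, norm_zero] at hnorm
    linarith
  have hGw : G = Complex.I / Real.pi * (-Complex.log (1 - w) - ∑' n, cSeqRemainder w n) := by
    refine tendsto_nhds_unique hG ((tendsto_sum_cSeq_mul_zpow hw hw1).congr fun N ↦ ?_)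
    simp_rw [mul_assoc, Complex.exp_int_mul]
    rfl
  have hlog : Complex.log (1 - w)
      = Real.log 2 + Real.log (Real.sin (θ / 2)) + Complex.arg (1 - w) * Complex.I := by
    rw [Complex.log, hnorm, Real.log_mul two_ne_zero hsin.ne']
    push_cast
    ring
  have hrest : ‖(Real.log 2 : ℂ) + Complex.arg (1 - w) * Complex.I + ∑' n, cSeqRemainder w n‖
      ≤ Real.log 2 + Real.pi + 2 := by
    refine (norm_add₃_le).trans (add_le_add_three ?_ ?_ (norm_tsum_cSeqRemainder_le hw))
    · rw [Complex.norm_real, Real.norm_of_nonneg (Real.log_nonneg one_le_two)]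
    · rw [norm_mul, Complex.norm_I, mul_one, Complex.norm_real, Real.norm_eq_abs]
      exact Complex.abs_arg_le_pi _
  calc ‖G - -(Complex.I / Real.pi) * (Real.log |Real.sin (θ / 2)| : ℂ)‖
      = ‖-(Complex.I / Real.pi)
          * ((Real.log 2 : ℂ) + Complex.arg (1 - w) * Complex.I + ∑' n, cSeqRemainder w n)‖ := by
        rw [hGw, hlog, Real.log_abs]
        ring_nf
    _ ≤ (Real.log 2 + Real.pi + 2) / Real.pi := by
        rw [norm_mul, norm_neg, norm_div, Complex.norm_I, Complex.norm_real,
          Real.norm_of_nonneg Real.pi_pos.le, one_div_mul_eq_div]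
        gcongr

theorem tendsto_norm_log_abs_sin_half :
    Tendsto (fun θ : ℝ ↦ ‖-(Complex.I / Real.pi) * (Real.log |Real.sin (θ / 2)| : ℂ)‖)
      (𝓝[>] 0) atTop := by
  have hsin : Tendsto (fun θ : ℝ ↦ Real.sin (θ / 2)) (𝓝[>] 0) (𝓝[≠] 0) := by
    refine tendsto_nhdsWithin_iff.mpr ⟨?_, ?_⟩
    · exact ((by fun_prop : Continuous fun θ : ℝ ↦ Real.sin (θ / 2)).tendsto' 0 0
        (by simp)).mono_left nhdsWithin_le_nhds
    · filter_upwards [Ioo_mem_nhdsGT Real.two_pi_pos] with θ hθ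
      exact (sin_half_pos hθ).ne'
  have hlog := tendsto_abs_atBot_atTop.comp (Real.tendsto_log_nhdsNE_zero.comp hsin)
  refine (hlog.atTop_div_const Real.pi_pos).congr fun θ ↦ ?_
  rw [norm_mul, norm_neg, norm_div, Complex.norm_I, Complex.norm_real, Complex.norm_real,
    Real.norm_of_nonneg Real.pi_pos.le, Real.norm_eq_abs, Real.log_abs]
  simp only [Function.comp_apply]
  ring

/-- If `g` is the sum of the Fourier series `∑_{n∈ℤ} c_n e^{inθ}` on `(0, 2π)`, then `g` is
not bounded there; in fact `g(θ) ∼ −(i/π) ln|sin(θ/2)|` as `θ → 0⁺`, so `ĉ ∉ L^∞`. -/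
theorem cSeq_symbol_unbounded (g : ℝ → ℂ)
    (hg : ∀ θ ∈ Ioo (0 : ℝ) (2 * Real.pi),
      Tendsto (fun N : ℕ =>
          ∑ m ∈ Finset.Icc (-(N : ℤ)) (N : ℤ), cSeq m * Complex.exp (m * θ * Complex.I))
        atTop (nhds (g θ))) :
    (¬ ∃ M : ℝ, ∀ θ ∈ Ioo (0 : ℝ) (2 * Real.pi), ‖g θ‖ ≤ M) ∧
    Tendsto (fun θ : ℝ =>
        g θ / (-(Complex.I / Real.pi) * (Real.log |Real.sin (θ / 2)| : ℂ)))
      (nhdsWithin 0 (Ioi (0 : ℝ))) (nhds 1) := by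
  set D : ℝ → ℂ := fun θ ↦ -(Complex.I / Real.pi) * (Real.log |Real.sin (θ / 2)| : ℂ)
  have hIoo : Ioo 0 (2 * Real.pi) ∈ 𝓝[>] (0 : ℝ) := Ioo_mem_nhdsGT Real.two_pi_pos
  have hD : (fun _ ↦ (1 : ℝ)) =o[𝓝[>] 0] D :=
    (isLittleO_one_left_iff ℝ).mpr tendsto_norm_log_abs_sin_half
  have hgD : (g - D) =O[𝓝[>] 0] fun _ ↦ (1 : ℝ) :=
    (isBigO_one_iff ℝ).mpr ⟨_, eventually_map.mpr <| mem_of_superset hIoo fun θ hθ ↦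
      norm_sub_log_sin_half_le hθ (hg θ hθ)⟩
  have hequiv : g ~[𝓝[>] 0] D := hgD.trans_isLittleO hD
  have hg_top : Tendsto (‖g ·‖) (𝓝[>] 0) atTop :=
    (isLittleO_one_left_iff ℝ).mp (hD.trans_isBigO hequiv.isBigO_symm)
  refine ⟨fun ⟨M, hM⟩ ↦ ?_, (isEquivalent_iff_tendsto_one ?_).mp hequiv⟩
  · obtain ⟨θ, hgθ, hθ⟩ := ((hg_top.eventually_gt_atTop M).and hIoo).exists
    exact (hM θ hθ).not_gt hgθ
  · exact (tendsto_norm_log_abs_sin_half.eventually_ne_atTop 0).mono fun θ ↦ norm_ne_zero_iff.mp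
end

section
/- Carleson embedding inequality: let μ be a Carleson measure on ℝⁿ × (0,∞) with norm ‖μ‖_c, and let P_t f(x) = ∫ P_t(x,y) f(y) dy with kernel satisfying 0 ≤ |P_t(x,y)| ≤ t^{−n} 𝟙_{|x−y|≤t}. Then for all f ∈ L²(ℝⁿ): ∫₀^∞ ∫_{ℝⁿ} |P_t f(x)|² dμ(x,t) ≤ C_n ‖μ‖_c ‖f‖₂², where C_n depends only on n. -/
/-!
`|P_t f(x)|` is at most `2ⁿ` times the average `A|f|(x, t)` of `|f|` over the ball `B(x, t)`, so
it suffices to bound `∫ (A|f|)² dμ`. The Carleson condition makes `A` of weak type (1,1) from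
`L¹(ℝⁿ)` to `L^{1,∞}(μ)`: by Vitali, the level set `{A g > α}` is covered by the tents over the
threefold enlargements of disjoint balls `B` with `α |B| < ∫_B g`, and each such tent has
`μ`-measure at most `3ⁿ ‖μ‖_c |B|`. As `A` is also bounded on `L^∞`, Marcinkiewicz interpolation
(split `f` at height `s / 2` and integrate the layer-cake formula in `s`) gives the `L²` bound,
with constant `8 · 12ⁿ`.
-/

open MeasureTheory Set

open Metric
open scoped ENNReal

theorem Ioi_inter_ofReal_lt_eq_Ioo {a : ℝ≥0∞} (ha : a ≠ ∞) :
    Ioi (0 : ℝ) ∩ {s | ENNReal.ofReal s < a} = Ioo 0 a.toReal := by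
  ext s
  simp only [mem_inter_iff, mem_Ioi, mem_ofPred_eq, mem_Ioo]
  exact and_congr_right fun hs => ENNReal.ofReal_lt_iff_lt_toReal hs.le ha

theorem volume_Ioi_inter_ofReal_lt (a : ℝ≥0∞) :
    volume (Ioi (0 : ℝ) ∩ {s | ENNReal.ofReal s < a}) = a := by
  rcases eq_or_ne a ∞ with rfl | ha
  · simp [Real.volume_Ioi]
  · rw [Ioi_inter_ofReal_lt_eq_Ioo ha, Real.volume_Ioo, sub_zero, ENNReal.ofReal_toReal ha]

theorem lintegral_Ioi_ofReal_two_mul_eq_top : ∫⁻ s in Ioi (0 : ℝ), ENNReal.ofReal (2 * s) = ∞ := by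
  refine top_unique ?_
  calc ∞ = ∫⁻ _ in Ioi (1 : ℝ), 1 := by simp [Real.volume_Ioi]
    _ ≤ ∫⁻ s in Ioi (1 : ℝ), ENNReal.ofReal (2 * s) :=
        setLIntegral_mono (by fun_prop) fun s (hs : 1 < s) => by
          rw [← ENNReal.ofReal_one]; exact ENNReal.ofReal_le_ofReal (by linarith)
    _ ≤ _ := lintegral_mono_set (Ioi_subset_Ioi zero_le_one)

theorem lintegral_Ioo_ofReal_two_mul_eq_sq {b : ℝ} (hb : 0 ≤ b) :
    ∫⁻ s in Ioo 0 b, ENNReal.ofReal (2 * s) = ENNReal.ofReal b ^ 2 := by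
  rw [← ofReal_integral_eq_lintegral_ofReal, ← integral_Ioc_eq_integral_Ioo,
    ← intervalIntegral.integral_of_le hb, intervalIntegral.integral_const_mul, integral_id,
    ← ENNReal.ofReal_pow hb]
  · congr 1; ring
  · exact (continuous_const.mul continuous_id).integrableOn_Icc.mono_set Ioo_subset_Icc_self
  · filter_upwards [self_mem_ae_restrict measurableSet_Ioo] with s hs
    exact mul_nonneg zero_le_two hs.1.le

theorem lintegral_Ioi_indicator_two_mul_eq_sq (a : ℝ≥0∞) :
    ∫⁻ s in Ioi (0 : ℝ), {s | ENNReal.ofReal s < a}.indicator (fun s => ENNReal.ofReal (2 * s)) s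
      = a ^ 2 := by
  have hm : MeasurableSet {s : ℝ | ENNReal.ofReal s < a} :=
    measurableSet_lt ENNReal.measurable_ofReal measurable_const
  rw [lintegral_indicator hm, Measure.restrict_restrict hm, inter_comm]
  rcases eq_or_ne a ∞ with rfl | ha
  · simpa using lintegral_Ioi_ofReal_two_mul_eq_top
  · rw [Ioi_inter_ofReal_lt_eq_Ioo ha, lintegral_Ioo_ofReal_two_mul_eq_sq ENNReal.toReal_nonneg,
      ENNReal.ofReal_toReal ha]

theorem lintegral_sq_eq_lintegral_meas_lt {Y : Type*} [MeasurableSpace Y] (μ : Measure Y)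
    [SFinite μ] {F : Y → ℝ≥0∞} (hF : Measurable F) :
    ∫⁻ y, F y ^ 2 ∂μ =
      ∫⁻ s in Ioi (0 : ℝ), ENNReal.ofReal (2 * s) * μ {y | ENNReal.ofReal s < F y} := by
  have hmeas : Measurable fun p : Y × ℝ =>
      {s : ℝ | ENNReal.ofReal s < F p.1}.indicator (fun s => ENNReal.ofReal (2 * s)) p.2 :=
    Measurable.ite (measurableSet_lt (by fun_prop) (hF.comp measurable_fst)) (by fun_prop)
      measurable_const
  simp_rw [← lintegral_Ioi_indicator_two_mul_eq_sq]
  rw [lintegral_lintegral_swap hmeas.aemeasurable]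
  refine setLIntegral_congr_fun measurableSet_Ioi fun s _ => ?_
  rw [← lintegral_indicator_const (measurableSet_lt measurable_const hF)]
  rfl

/-- The part of `f` above height `s / 2`. -/
noncomputable def highPart {X : Type*} (f : X → ℝ≥0∞) (s : ℝ) : X → ℝ≥0∞ :=
  {x | ENNReal.ofReal s < 2 * f x}.indicator f

theorem le_add_highPart {X : Type*} (f : X → ℝ≥0∞) (s : ℝ) (x : X) :
    f x ≤ ENNReal.ofReal (s / 2) + highPart f s x := by
  by_cases hx : ENNReal.ofReal s < 2 * f x
  · simp only [highPart, indicator_apply, mem_ofPred_eq, if_pos hx]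
    exact le_add_self
  · simp only [highPart, indicator_apply, mem_ofPred_eq, if_neg hx, add_zero]
    rw [ENNReal.ofReal_div_of_pos two_pos, ENNReal.ofReal_ofNat,
      ENNReal.le_div_iff_mul_le (by simp) (by simp), mul_comm]
    exact not_lt.1 hx

section highPart

variable {X : Type*} [MeasurableSpace X] {f : X → ℝ≥0∞}

theorem measurable_uncurry_highPart (hf : Measurable f) :
    Measurable (Function.uncurry (highPart f)) :=
  Measurable.ite (measurableSet_lt measurable_fst.ennreal_ofReal
    ((hf.comp measurable_snd).const_mul 2)) (hf.comp measurable_snd) measurable_const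

theorem lintegral_Ioi_lintegral_highPart (ν : Measure X) [SFinite ν] (hf : Measurable f) :
    ∫⁻ s in Ioi 0, ∫⁻ x, highPart f s x ∂ν = 2 * ∫⁻ x, f x ^ 2 ∂ν := by
  rw [lintegral_lintegral_swap (measurable_uncurry_highPart hf).aemeasurable,
    ← lintegral_const_mul _ (by fun_prop)]
  refine lintegral_congr fun x => ?_
  have hm : MeasurableSet {s : ℝ | ENNReal.ofReal s < 2 * f x} :=
    measurableSet_lt ENNReal.measurable_ofReal measurable_const
  change ∫⁻ s in Ioi 0, {s | ENNReal.ofReal s < 2 * f x}.indicator (fun _ => f x) s = _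
  rw [lintegral_indicator_const hm, Measure.restrict_apply hm, inter_comm,
    volume_Ioi_inter_ofReal_lt]
  ring

end highPart

/-- Marcinkiewicz interpolation between weak type (1,1) and the `L^∞` bound encoded in `hA`. -/
theorem lintegral_sq_le_of_weakType_one_one {X Y : Type*} [MeasurableSpace X] [MeasurableSpace Y]
    {ν : Measure X} {μ : Measure Y} [SFinite ν] [SFinite μ]
    (A : (X → ℝ≥0∞) → Y → ℝ≥0∞) {C : ℝ≥0∞}
    (hA : ∀ (c : ℝ≥0∞) (g h : X → ℝ≥0∞), (∀ x, h x ≤ c + g x) → ∀ y, A h y ≤ c + A g y)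
    (hweak : ∀ (g : X → ℝ≥0∞) (α : ℝ≥0∞), α * μ {y | α < A g y} ≤ C * ∫⁻ x, g x ∂ν)
    {f : X → ℝ≥0∞} (hf : Measurable f) (hAf : Measurable (A f)) :
    ∫⁻ y, A f y ^ 2 ∂μ ≤ 8 * C * ∫⁻ x, f x ^ 2 ∂ν := by
  have level_le (s : ℝ) (hs : 0 < s) : ENNReal.ofReal (2 * s) * μ {y | ENNReal.ofReal s < A f y}
      ≤ 4 * C * ∫⁻ x, highPart f s x ∂ν := by
    have hsub : {y | ENNReal.ofReal s < A f y} ⊆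
        {y | ENNReal.ofReal (s / 2) < A (highPart f s) y} := by
      intro y hy
      have h1 := (hy : ENNReal.ofReal s < A f y).trans_le (hA _ _ _ (le_add_highPart f s) y)
      rw [show ENNReal.ofReal s = ENNReal.ofReal (s / 2) + ENNReal.ofReal (s / 2) by
        rw [← ENNReal.ofReal_add (by positivity) (by positivity), add_halves]] at h1
      exact (ENNReal.add_lt_add_iff_left ENNReal.ofReal_ne_top).1 h1
    calc ENNReal.ofReal (2 * s) * μ {y | ENNReal.ofReal s < A f y}
        ≤ ENNReal.ofReal (2 * s) * μ {y | ENNReal.ofReal (s / 2) < A (highPart f s) y} := by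
          gcongr
      _ = 4 * (ENNReal.ofReal (s / 2) * μ {y | ENNReal.ofReal (s / 2) < A (highPart f s) y}) := by
          rw [← mul_assoc, show 2 * s = 4 * (s / 2) by ring, ENNReal.ofReal_mul (by norm_num),
            ENNReal.ofReal_ofNat]
      _ ≤ 4 * C * ∫⁻ x, highPart f s x ∂ν := by
          rw [mul_assoc]
          exact mul_le_mul_right (hweak _ _) 4
  have : Measurable fun s => ∫⁻ x, highPart f s x ∂ν :=
    (measurable_uncurry_highPart hf).lintegral_prod_right'
  calc ∫⁻ y, A f y ^ 2 ∂μ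
      = ∫⁻ s in Ioi 0, ENNReal.ofReal (2 * s) * μ {y | ENNReal.ofReal s < A f y} :=
        lintegral_sq_eq_lintegral_meas_lt μ hAf
    _ ≤ ∫⁻ s in Ioi 0, 4 * C * ∫⁻ x, highPart f s x ∂ν :=
        setLIntegral_mono' measurableSet_Ioi level_le
    _ = 8 * C * ∫⁻ x, f x ^ 2 ∂ν := by
        rw [lintegral_const_mul _ this, lintegral_Ioi_lintegral_highPart ν hf]
        ring

theorem laverage_le_const_add {X : Type*} [MeasurableSpace X] {ν : Measure X} {c : ℝ≥0∞}
    {g h : X → ℝ≥0∞} (hle : ∀ x, h x ≤ c + g x) : ⨍⁻ x, h x ∂ν ≤ c + ⨍⁻ x, g x ∂ν := by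
  simp only [laverage_eq]
  calc (∫⁻ x, h x ∂ν) / ν univ
      ≤ (∫⁻ x, c + g x ∂ν) / ν univ := by gcongr; exact hle _
    _ = c * ν univ / ν univ + (∫⁻ x, g x ∂ν) / ν univ := by
        rw [lintegral_add_left measurable_const, lintegral_const, ENNReal.add_div]
    _ ≤ c + (∫⁻ x, g x ∂ν) / ν univ := by gcongr; exact ENNReal.div_le_of_le_mul le_rfl

theorem mul_measure_le_setLIntegral_of_le_setLAverage {X : Type*} [MeasurableSpace X]
    {ν : Measure X} {s : Set X} {g : X → ℝ≥0∞} {α : ℝ≥0∞} (hs : ν s ≠ ∞)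
    (h : α ≤ ⨍⁻ x in s, g x ∂ν) : α * ν s ≤ ∫⁻ x in s, g x ∂ν := by
  rw [← measure_mul_setLAverage g hs, mul_comm]
  gcongr

noncomputable def ballAverage {X : Type*} [PseudoMetricSpace X] [MeasurableSpace X] (ν : Measure X)
    (g : X → ℝ≥0∞) (p : X × ℝ) : ℝ≥0∞ :=
  ⨍⁻ y in closedBall p.1 p.2, g y ∂ν

theorem measurable_measure_closedBall {X : Type*} [PseudoMetricSpace X] [SecondCountableTopology X]
    [MeasurableSpace X] [OpensMeasurableSpace X] (ν : Measure X) [SFinite ν] :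
    Measurable fun p : X × ℝ => ν (closedBall p.1 p.2) :=
  measurable_measure_prodMk_left (s := {q : (X × ℝ) × X | dist q.2 q.1.1 ≤ q.1.2})
    (measurableSet_le (by fun_prop) (by fun_prop))

theorem measurable_ballAverage {X : Type*} [PseudoMetricSpace X] [SecondCountableTopology X]
    [MeasurableSpace X] [OpensMeasurableSpace X] (ν : Measure X) [SFinite ν] (g : X → ℝ≥0∞) :
    Measurable (ballAverage ν g) := by
  have : ballAverage ν g =
      fun p => ν.withDensity g (closedBall p.1 p.2) / ν (closedBall p.1 p.2) := by
    funext p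
    rw [ballAverage, setLAverage_eq, withDensity_apply _ measurableSet_closedBall]
  rw [this]
  exact (measurable_measure_closedBall _).div (measurable_measure_closedBall _)

theorem enorm_integral_mul_le_ballAverage {n : ℕ} {𝕜 : Type*} [RCLike 𝕜] {t : ℝ} (ht : 0 < t)
    (x : Fin n → ℝ) {K f : (Fin n → ℝ) → 𝕜} (hK_le : ∀ y, ‖K y‖ ≤ (t ^ n)⁻¹)
    (hK_supp : ∀ y, t < dist x y → K y = 0) :
    ‖∫ y, K y * f y‖ₑ ≤ 2 ^ n * ballAverage volume (fun y => ‖f y‖ₑ) (x, t) := by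
  calc ‖∫ y, K y * f y‖ₑ
      ≤ ∫⁻ y, ‖K y * f y‖ₑ := enorm_integral_le_lintegral_enorm _
    _ ≤ ∫⁻ y, (closedBall x t).indicator (fun y => ENNReal.ofReal (t ^ n)⁻¹ * ‖f y‖ₑ) y := by
        refine lintegral_mono fun y => ?_
        by_cases hy : y ∈ closedBall x t
        · rw [indicator_of_mem hy, enorm_mul, ← ofReal_norm]
          gcongr
          exact hK_le y
        · rw [indicator_of_notMem hy, hK_supp y (by rw [dist_comm]; simpa using hy), zero_mul,
            enorm_zero]
    _ = ENNReal.ofReal (t ^ n)⁻¹ * ∫⁻ y in closedBall x t, ‖f y‖ₑ := by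
        rw [lintegral_indicator measurableSet_closedBall,
          lintegral_const_mul' _ _ ENNReal.ofReal_ne_top]
    _ = 2 ^ n * ballAverage volume (fun y => ‖f y‖ₑ) (x, t) := by
        rw [ballAverage, setLAverage_eq, Real.volume_pi_closedBall x ht.le, Fintype.card_fin,
          mul_pow, ENNReal.ofReal_mul (by positivity), ENNReal.ofReal_pow zero_le_two,
          ENNReal.ofReal_ofNat, ← mul_div_assoc, ENNReal.mul_div_mul_left _ _ (by simp) (by simp),
          ENNReal.ofReal_inv_of_pos (by positivity), div_eq_mul_inv, mul_comm]

def IsCarleson {n : ℕ} (μ : Measure ((Fin n → ℝ) × ℝ)) (C : ℝ) : Prop :=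
  ∀ (a : Fin n → ℝ) (l : ℝ), 0 < l → μ (cube n a l ×ˢ Ioc 0 l) ≤ ENNReal.ofReal (C * l ^ n)

-- `Fin n → ℝ` carries the sup metric, so balls are cubes.
theorem closedBall_subset_cube {n : ℕ} (c : Fin n → ℝ) {r : ℝ} :
    closedBall c r ⊆ cube n (fun i => c i - r) (2 * r) := by
  intro y hy i
  have := abs_le.1 ((Real.dist_eq _ _ ▸ dist_le_pi_dist y c i).trans (mem_closedBall.1 hy))
  constructor <;> linarith [this.1, this.2]

namespace IsCarleson

variable {n : ℕ} {μ : Measure ((Fin n → ℝ) × ℝ)} {C : ℝ}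

theorem measure_closedBall_prod_le (hμ : IsCarleson μ C) (c : Fin n → ℝ) {r : ℝ} (hr : 0 < r) :
    μ (closedBall c r ×ˢ Ioc 0 (2 * r)) ≤ ENNReal.ofReal C * volume (closedBall c r) := by
  calc μ (closedBall c r ×ˢ Ioc 0 (2 * r))
      ≤ μ (cube n (fun i => c i - r) (2 * r) ×ˢ Ioc 0 (2 * r)) :=
        measure_mono (prod_mono (closedBall_subset_cube c) subset_rfl)
    _ ≤ ENNReal.ofReal (C * (2 * r) ^ n) := hμ _ _ (by positivity)
    _ = ENNReal.ofReal C * volume (closedBall c r) := by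
        rw [Real.volume_pi_closedBall c hr.le, Fintype.card_fin,
          ENNReal.ofReal_mul' (by positivity)]

theorem sigmaFinite_restrict (hμ : IsCarleson μ C) : SigmaFinite (μ.restrict {p | 0 < p.2}) := by
  let T (k : ℕ) : Set ((Fin n → ℝ) × ℝ) := closedBall 0 (k + 1) ×ˢ Ioc 0 (2 * (k + 1 : ℝ))
  refine ⟨⟨⟨fun k => T k ∪ {p | 0 < p.2}ᶜ, fun _ => trivial, fun k => ?_, ?_⟩⟩⟩
  · calc μ.restrict {p | 0 < p.2} (T k ∪ {p | 0 < p.2}ᶜ) ≤ μ (T k) := by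
          rw [Measure.restrict_apply' (measurableSet_lt measurable_const measurable_snd),
            union_inter_distrib_right, compl_inter_self, union_empty]
          exact measure_mono inter_subset_left
      _ < ∞ := (hμ.measure_closedBall_prod_le 0 (by positivity)).trans_lt
          (ENNReal.mul_lt_top ENNReal.ofReal_lt_top measure_closedBall_lt_top)
  · refine eq_univ_of_forall fun p => ?_
    by_cases hp : 0 < p.2
    · obtain ⟨k, hk⟩ := exists_nat_ge (max ‖p.1‖ p.2)
      refine mem_iUnion.2 ⟨k, Or.inl ⟨?_, hp, ?_⟩⟩
      · rw [mem_closedBall_zero_iff]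
        linarith [le_max_left ‖p.1‖ p.2]
      · linarith [le_max_right ‖p.1‖ p.2]
    · exact mem_iUnion.2 ⟨0, Or.inr hp⟩

theorem mul_measure_tent_le (hμ : IsCarleson μ C) {g : (Fin n → ℝ) → ℝ≥0∞} {α : ℝ≥0∞}
    (c : Fin n → ℝ) {r : ℝ} (hr : 0 < r) (hα : α ≤ ballAverage volume g (c, r)) :
    α * μ (closedBall c (3 * r) ×ˢ Ioc 0 (2 * (3 * r))) ≤
      3 ^ n * ENNReal.ofReal C * ∫⁻ y in closedBall c r, g y := by
  calc α * μ (closedBall c (3 * r) ×ˢ Ioc 0 (2 * (3 * r)))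
      ≤ α * (ENNReal.ofReal C * volume (closedBall c (3 * r))) :=
        mul_le_mul_right (hμ.measure_closedBall_prod_le c (by positivity)) α
    _ = 3 ^ n * ENNReal.ofReal C * (α * volume (closedBall c r)) := by
        rw [Real.volume_pi_closedBall _ (by positivity), Real.volume_pi_closedBall _ hr.le,
          Fintype.card_fin, show 2 * (3 * r) = 3 * (2 * r) by ring, mul_pow,
          ENNReal.ofReal_mul (by positivity), ENNReal.ofReal_pow (by norm_num)]
        simp only [ENNReal.ofReal_ofNat]
        ring
    _ ≤ 3 ^ n * ENNReal.ofReal C * ∫⁻ y in closedBall c r, g y := by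
        gcongr
        exact mul_measure_le_setLIntegral_of_le_setLAverage measure_closedBall_lt_top.ne hα

-- Vitali's covering lemma needs bounded radii.
theorem mul_measure_ballAverage_gt_le_of_le_radius (hμ : IsCarleson μ C)
    (g : (Fin n → ℝ) → ℝ≥0∞) (α : ℝ≥0∞) (R : ℝ) :
    α * μ {p | p.2 ∈ Ioc 0 R ∧ α < ballAverage volume g p} ≤
      3 ^ n * ENNReal.ofReal C * ∫⁻ y, g y := by
  set E := {p : (Fin n → ℝ) × ℝ | p.2 ∈ Ioc 0 R ∧ α < ballAverage volume g p}
  set B : (Fin n → ℝ) × ℝ → Set (Fin n → ℝ) := fun p => closedBall p.1 p.2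
  obtain ⟨u, huE, hu_disj, hu_cover⟩ := Vitali.exists_disjoint_subfamily_covering_enlargement
    B E Prod.snd 2 one_lt_two (fun p hp => hp.1.1.le) R (fun p hp => hp.1.2)
    (fun p hp => nonempty_closedBall.2 hp.1.1.le)
  have hu_count : u.Countable := hu_disj.countable_of_nonempty_interior fun b hb =>
    (nonempty_ball.2 (huE hb).1.1).mono ball_subset_interior_closedBall
  have hE_cover : E ⊆ ⋃ b ∈ u, closedBall b.1 (3 * b.2) ×ˢ Ioc 0 (2 * (3 * b.2)) := by
    intro a ha
    obtain ⟨b, hbu, ⟨z, hza, hzb⟩, hab⟩ := hu_cover a ha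
    refine mem_biUnion hbu ⟨?_, ha.1.1, by linarith [(huE hbu).1.1]⟩
    calc dist a.1 b.1 ≤ dist z a.1 + dist z b.1 := dist_triangle_left _ _ _
      _ ≤ a.2 + b.2 := add_le_add hza hzb
      _ ≤ 3 * b.2 := by linarith
  calc α * μ E
      ≤ α * ∑' b : u, μ (closedBall b.1.1 (3 * b.1.2) ×ˢ Ioc 0 (2 * (3 * b.1.2))) :=
        mul_le_mul_right ((measure_mono hE_cover).trans (measure_biUnion_le μ hu_count _)) α
    _ ≤ ∑' b : u, 3 ^ n * ENNReal.ofReal C * ∫⁻ y in B b, g y := by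
        rw [← ENNReal.tsum_mul_left]
        exact ENNReal.tsum_le_tsum fun b =>
          hμ.mul_measure_tent_le b.1.1 (huE b.2).1.1 (huE b.2).2.le
    _ = 3 ^ n * ENNReal.ofReal C * ∫⁻ y in ⋃ b ∈ u, B b, g y := by
        rw [ENNReal.tsum_mul_left, lintegral_biUnion hu_count
          (fun b _ => measurableSet_closedBall) hu_disj]
    _ ≤ 3 ^ n * ENNReal.ofReal C * ∫⁻ y, g y :=
        mul_le_mul_right (setLIntegral_le_lintegral _ _) _

theorem mul_measure_ballAverage_gt_le (hμ : IsCarleson μ C) (g : (Fin n → ℝ) → ℝ≥0∞)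
    (α : ℝ≥0∞) :
    α * μ.restrict {p | 0 < p.2} {p | α < ballAverage volume g p} ≤
      3 ^ n * ENNReal.ofReal C * ∫⁻ y, g y := by
  have h_union : {p | α < ballAverage volume g p} ∩ {p | 0 < p.2} =
      ⋃ R : ℕ, {p : (Fin n → ℝ) × ℝ | p.2 ∈ Ioc 0 (R : ℝ) ∧ α < ballAverage volume g p} := by
    ext p
    simp only [mem_inter_iff, mem_ofPred_eq, mem_iUnion, mem_Ioc]
    exact ⟨fun ⟨hα, hp⟩ => (exists_nat_ge p.2).imp fun R hR => ⟨⟨hp, hR⟩, hα⟩,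
      fun ⟨R, ⟨hp, _⟩, hα⟩ => ⟨hα, hp⟩⟩
  have h_mono : Monotone fun R : ℕ =>
      {p : (Fin n → ℝ) × ℝ | p.2 ∈ Ioc 0 (R : ℝ) ∧ α < ballAverage volume g p} :=
    fun R R' h p hp => ⟨Ioc_subset_Ioc_right (Nat.cast_le.2 h) hp.1, hp.2⟩
  rw [Measure.restrict_apply' (measurableSet_lt measurable_const measurable_snd), h_union,
    h_mono.measure_iUnion, ENNReal.mul_iSup]
  exact iSup_le fun R => hμ.mul_measure_ballAverage_gt_le_of_le_radius g α R

end IsCarleson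

/-- Carleson embedding inequality: if `μ` is a Carleson measure on `ℝⁿ × (0,∞)` with norm at
most `Cc`, and `P_t` has a kernel bounded by `t^{−n} 𝟙_{dist(x,y)≤t}`, then
`∫∫ |P_t f(x)|² dμ ≤ C_n Cc ‖f‖₂²`, with `C_n` depending only on `n`. -/
theorem carleson_embedding (n : ℕ) :
    ∃ Cn : ℝ, 0 < Cn ∧
      ∀ (μ : Measure ((Fin n → ℝ) × ℝ)) (Cc : ℝ), 0 ≤ Cc →
        (∀ (a : Fin n → ℝ) (l : ℝ), 0 < l →
          μ ((cube n a l) ×ˢ Ioc (0 : ℝ) l) ≤ ENNReal.ofReal (Cc * l ^ n)) →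
        μ {p : (Fin n → ℝ) × ℝ | p.2 ≤ 0} = 0 →
        ∀ P : ℝ → (Fin n → ℝ) → (Fin n → ℝ) → ℂ,
          (∀ t : ℝ, Measurable (Function.uncurry (P t))) →
          (∀ (t : ℝ) (x y : Fin n → ℝ), 0 < t → ‖P t x y‖ ≤ (t ^ n)⁻¹) →
          (∀ (t : ℝ) (x y : Fin n → ℝ), 0 < t → t < dist x y → P t x y = 0) →
          ∀ f : (Fin n → ℝ) → ℂ, Measurable f →
            ∫⁻ p : (Fin n → ℝ) × ℝ, ENNReal.ofReal (‖∫ y, P p.2 p.1 y * f y‖ ^ 2) ∂μ ≤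
              ENNReal.ofReal (Cn * Cc) * ∫⁻ x, ENNReal.ofReal (‖f x‖ ^ 2) := by
  refine ⟨8 * 12 ^ n, by positivity, ?_⟩
  intro μ Cc _ (hμ : IsCarleson μ Cc) hμ_null P _ hP_le hP_supp f hf
  set A := ballAverage volume fun y => ‖f y‖ₑ
  have hμS : μ.restrict {p | 0 < p.2} = μ := Measure.restrict_eq_self_of_ae_mem <|
    ae_iff.2 (by simpa only [mem_ofPred_eq, not_lt] using hμ_null)
  have := hμ.sigmaFinite_restrict
  have h_weak : ∫⁻ p in {p | 0 < p.2}, A p ^ 2 ∂μ ≤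
      8 * (3 ^ n * ENNReal.ofReal Cc) * ∫⁻ x, ‖f x‖ₑ ^ 2 :=
    lintegral_sq_le_of_weakType_one_one (ballAverage volume)
      (fun c g h hle p => laverage_le_const_add hle) hμ.mul_measure_ballAverage_gt_le
      hf.enorm (measurable_ballAverage _ _)
  simp only [ENNReal.ofReal_pow (norm_nonneg _), ofReal_norm]
  calc ∫⁻ p, ‖∫ y, P p.2 p.1 y * f y‖ₑ ^ 2 ∂μ
      = ∫⁻ p in {p | 0 < p.2}, ‖∫ y, P p.2 p.1 y * f y‖ₑ ^ 2 ∂μ := by rw [hμS]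
    _ ≤ ∫⁻ p in {p | 0 < p.2}, (2 ^ n * A p) ^ 2 ∂μ :=
        setLIntegral_mono' (measurableSet_lt measurable_const measurable_snd) fun p hp =>
          pow_le_pow_left' (enorm_integral_mul_le_ballAverage hp p.1 (hP_le _ _ · hp)
            (hP_supp _ _ · hp)) 2
    _ ≤ 4 ^ n * (8 * (3 ^ n * ENNReal.ofReal Cc) * ∫⁻ x, ‖f x‖ₑ ^ 2) := by
        simp_rw [mul_pow, ← pow_mul, mul_comm n 2, pow_mul, show (2 : ℝ≥0∞) ^ 2 = 4 by norm_num]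
        rw [lintegral_const_mul' _ _ (by simp)]
        gcongr
    _ = ENNReal.ofReal (8 * 12 ^ n * Cc) * ∫⁻ x, ‖f x‖ₑ ^ 2 := by
        rw [ENNReal.ofReal_mul (by positivity), ENNReal.ofReal_mul (by positivity),
          ENNReal.ofReal_pow (by norm_num)]
        simp only [ENNReal.ofReal_ofNat]
        rw [show (12 : ℝ≥0∞) = 4 * 3 by norm_num, mul_pow]
        ring
end

section
/- For a cube Q ⊂ ℝⁿ and h ∈ H¹(Q), one has |∫_Q ∇h| ≤ C ℓ(Q)^{(n−1)/2} (∫_Q |h|²)^{1/4} (∫_Q |∇h|²)^{1/4}, with C depending only on n. -/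
/-!
Slice the cube along the `i`-th axis. On each slice `∫ ∂ᵢh` is the jump `g(b) - g(a)` of the
restriction `g` of `h` to a segment of length `L = ℓ(Q)`, and
`‖g(b) - g(a)‖² ≤ 12 ‖g‖₂ ‖g'‖₂`: if `L ‖g'‖₂ ≤ ‖g‖₂` this follows from
`‖g(b) - g(a)‖² ≤ L ‖g'‖₂²`, and otherwise from the trace bound
`‖g(c)‖² ≤ ‖g‖₂² / L + 2 ‖g‖₂ ‖g'‖₂` (integrate `(‖g‖²)' = 2⟪g, g'⟫`) at both endpoints.
Cauchy–Schwarz on the face, of volume `ℓ^{n-1}`, and then across the slices gives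
`‖∫_Q ∂ᵢh‖² ≤ 12 ℓ^{n-1} ‖h‖₂ ‖∂ᵢh‖₂`; summing over `i` gives the theorem with `C = √(12 n)`.
-/

open MeasureTheory Set

section CauchySchwarz

variable {α : Type*} [MeasurableSpace α] {μ : Measure α}

theorem integral_mul_le_sqrt_mul_sqrt {f g : α → ℝ} (hf₀ : 0 ≤ᵐ[μ] f)
    (hg₀ : 0 ≤ᵐ[μ] g) (hf : MemLp f 2 μ) (hg : MemLp g 2 μ) :
    ∫ x, f x * g x ∂μ ≤ √(∫ x, f x ^ 2 ∂μ) * √(∫ x, g x ^ 2 ∂μ) := by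
  have := integral_mul_le_Lp_mul_Lq_of_nonneg Real.HolderConjugate.two_two hf₀ hg₀
    (by simpa using hf) (by simpa using hg)
  simpa only [Real.rpow_two, Real.sqrt_eq_rpow] using this

theorem sq_norm_integral_le_measureReal_mul {E : Type*} [NormedAddCommGroup E]
    [NormedSpace ℝ E] [IsFiniteMeasure μ] {f : α → E} (hf : MemLp f 2 μ) :
    ‖∫ x, f x ∂μ‖ ^ 2 ≤ μ.real univ * ∫ x, ‖f x‖ ^ 2 ∂μ := by
  have hcs := integral_mul_le_sqrt_mul_sqrt (f := fun _ => (1 : ℝ)) (g := fun x => ‖f x‖)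
    (.of_forall fun _ => zero_le_one) (.of_forall fun _ => norm_nonneg _) (memLp_const 1) hf.norm
  simp only [one_mul, one_pow, integral_const, smul_eq_mul, mul_one] at hcs
  calc ‖∫ x, f x ∂μ‖ ^ 2 ≤ (∫ x, ‖f x‖ ∂μ) ^ 2 := by
        gcongr; exact norm_integral_le_integral_norm f
    _ ≤ (√(μ.real univ) * √(∫ x, ‖f x‖ ^ 2 ∂μ)) ^ 2 := by
        gcongr
    _ = μ.real univ * ∫ x, ‖f x‖ ^ 2 ∂μ := by
        rw [mul_pow, Real.sq_sqrt measureReal_nonneg,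
          Real.sq_sqrt (integral_nonneg fun _ => by positivity)]

theorem MeasureTheory.Integrable.memLp_two_sqrt {f : α → ℝ} (hf : Integrable f μ)
    (hf₀ : ∀ x, 0 ≤ f x) : MemLp (fun x => √(f x)) 2 μ :=
  (memLp_two_iff_integrable_sq (Real.continuous_sqrt.comp_aestronglyMeasurable
    hf.aestronglyMeasurable)).2 (hf.congr (.of_forall fun x => (Real.sq_sqrt (hf₀ x)).symm))

theorem Continuous.memLp_two_restrict_of_isCompact [TopologicalSpace α] [OpensMeasurableSpace α]
    [T2Space α] [IsFiniteMeasureOnCompacts μ] {E : Type*} [NormedAddCommGroup E] {f : α → E}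
    (hf : Continuous f) {s : Set α} (hs : IsCompact s) : MemLp f 2 (μ.restrict s) :=
  (memLp_two_iff_integrable_sq_norm
    (hf.continuousOn.aestronglyMeasurable_of_isCompact hs hs.measurableSet)).2
    ((hf.norm.pow 2).continuousOn.integrableOn_compact hs)

end CauchySchwarz

section Interval

variable {E : Type*} [NormedAddCommGroup E] {g g' : ℝ → E} {a b : ℝ}

theorem sq_norm_sub_le_mul_integral_sq_norm_deriv [NormedSpace ℝ E] [CompleteSpace E]
    (hg : ∀ t, HasDerivAt g (g' t) t) (hg' : Continuous g') (hab : a ≤ b) :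
    ‖g b - g a‖ ^ 2 ≤ (b - a) * ∫ t in Icc a b, ‖g' t‖ ^ 2 := by
  have hftc : ∫ t in Icc a b, g' t = g b - g a := by
    rw [integral_Icc_eq_integral_Ioc, ← intervalIntegral.integral_of_le hab]
    exact intervalIntegral.integral_eq_sub_of_hasDerivAt (fun t _ => hg t)
      (hg'.intervalIntegrable a b)
  have := sq_norm_integral_le_measureReal_mul
    (hg'.memLp_two_restrict_of_isCompact (μ := volume) (isCompact_Icc (a := a) (b := b)))
  rwa [hftc, measureReal_restrict_apply_univ, Real.volume_real_Icc_of_le hab] at this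

variable [InnerProductSpace ℝ E]

theorem sq_norm_le_sq_norm_add_integral (hg : ∀ t, HasDerivAt g (g' t) t) (hg' : Continuous g')
    {s c : ℝ} (hs : s ∈ Icc a b) (hc : c ∈ Icc a b) :
    ‖g c‖ ^ 2 ≤ ‖g s‖ ^ 2 + ∫ t in Icc a b, 2 * (‖g t‖ * ‖g' t‖) := by
  have hgc : Continuous g := continuous_iff_continuousAt.2 fun t => (hg t).continuousAt
  have hψ : Continuous fun t => 2 * inner ℝ (g t) (g' t) := continuous_const.mul (hgc.inner hg')
  have hftc : ∫ t in s..c, 2 * inner ℝ (g t) (g' t) = ‖g c‖ ^ 2 - ‖g s‖ ^ 2 :=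
    intervalIntegral.integral_eq_sub_of_hasDerivAt (fun t _ => (hg t).norm_sq)
      (hψ.intervalIntegrable s c)
  have hsub : uIoc s c ⊆ Icc a b :=
    Ioc_subset_Icc_self.trans (Icc_subset_Icc (le_min hs.1 hc.1) (max_le hs.2 hc.2))
  have hbound : ‖g c‖ ^ 2 - ‖g s‖ ^ 2 ≤ ∫ t in Icc a b, 2 * (‖g t‖ * ‖g' t‖) :=
    calc ‖g c‖ ^ 2 - ‖g s‖ ^ 2 ≤ ∫ t in uIoc s c, ‖2 * inner ℝ (g t) (g' t)‖ := by
          rw [← hftc]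
          exact (Real.le_norm_self _).trans intervalIntegral.norm_integral_le_integral_norm_uIoc
      _ ≤ ∫ t in Icc a b, ‖2 * inner ℝ (g t) (g' t)‖ :=
          setIntegral_mono_set (hψ.norm.integrableOn_Icc) (.of_forall fun _ => norm_nonneg _)
            hsub.eventuallyLE
      _ ≤ ∫ t in Icc a b, 2 * (‖g t‖ * ‖g' t‖) := by
          refine setIntegral_mono_on hψ.norm.integrableOn_Icc
            (continuous_const.mul (hgc.norm.mul hg'.norm)).integrableOn_Icc measurableSet_Icc
            fun t _ => ?_
          rw [norm_mul, Real.norm_two]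
          gcongr
          exact norm_inner_le_norm _ _
  linarith

theorem mul_sq_norm_le_integral_add (hg : ∀ t, HasDerivAt g (g' t) t) (hg' : Continuous g')
    {c : ℝ} (hc : c ∈ Icc a b) :
    (b - a) * ‖g c‖ ^ 2 ≤ (∫ t in Icc a b, ‖g t‖ ^ 2) +
      (b - a) * (2 * (√(∫ t in Icc a b, ‖g t‖ ^ 2) * √(∫ t in Icc a b, ‖g' t‖ ^ 2))) := by
  have hgc : Continuous g := continuous_iff_continuousAt.2 fun t => (hg t).continuousAt
  have hab : a ≤ b := hc.1.trans hc.2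
  set K := ∫ t in Icc a b, 2 * (‖g t‖ * ‖g' t‖) with hK_def
  have hK : K ≤ 2 * (√(∫ t in Icc a b, ‖g t‖ ^ 2) * √(∫ t in Icc a b, ‖g' t‖ ^ 2)) := by
    rw [hK_def, integral_const_mul]
    gcongr
    exact integral_mul_le_sqrt_mul_sqrt (.of_forall fun _ => norm_nonneg _)
      (.of_forall fun _ => norm_nonneg _) (hgc.norm.memLp_two_restrict_of_isCompact isCompact_Icc)
      (hg'.norm.memLp_two_restrict_of_isCompact isCompact_Icc)
  have hgi : IntegrableOn (fun t => ‖g t‖ ^ 2) (Icc a b) := (hgc.norm.pow 2).integrableOn_Icc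
  calc (b - a) * ‖g c‖ ^ 2 = ∫ _ in Icc a b, ‖g c‖ ^ 2 := by
        rw [setIntegral_const, Real.volume_real_Icc_of_le hab, smul_eq_mul]
    _ ≤ ∫ s in Icc a b, (‖g s‖ ^ 2 + K) :=
        setIntegral_mono_on (integrable_const _) (hgi.add (integrable_const _)) measurableSet_Icc
          fun s hs => sq_norm_le_sq_norm_add_integral hg hg' hs hc
    _ = (∫ t in Icc a b, ‖g t‖ ^ 2) + (b - a) * K := by
        rw [integral_add hgi (integrable_const _), setIntegral_const,
          Real.volume_real_Icc_of_le hab, smul_eq_mul]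
    _ ≤ _ := by gcongr

theorem sq_norm_sub_le_mul_sqrt_mul_sqrt [CompleteSpace E] (hg : ∀ t, HasDerivAt g (g' t) t)
    (hg' : Continuous g') (hab : a ≤ b) :
    ‖g b - g a‖ ^ 2 ≤
      12 * √(∫ t in Icc a b, ‖g t‖ ^ 2) * √(∫ t in Icc a b, ‖g' t‖ ^ 2) := by
  rcases hab.eq_or_lt with rfl | hlt
  · simp
  set Y := √(∫ t in Icc a b, ‖g t‖ ^ 2)
  set X := √(∫ t in Icc a b, ‖g' t‖ ^ 2)
  have hY : Y ^ 2 = ∫ t in Icc a b, ‖g t‖ ^ 2 :=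
    Real.sq_sqrt (setIntegral_nonneg measurableSet_Icc fun _ _ => by positivity)
  have hX : X ^ 2 = ∫ t in Icc a b, ‖g' t‖ ^ 2 :=
    Real.sq_sqrt (setIntegral_nonneg measurableSet_Icc fun _ _ => by positivity)
  have hY₀ : 0 ≤ Y := Real.sqrt_nonneg _
  have hX₀ : 0 ≤ X := Real.sqrt_nonneg _
  rcases le_total Y ((b - a) * X) with hYX | hYX
  · have hend : ∀ c ∈ Icc a b, ‖g c‖ ^ 2 ≤ 3 * (Y * X) := by
      intro c hc
      have htrace : (b - a) * ‖g c‖ ^ 2 ≤ Y ^ 2 + (b - a) * (2 * (Y * X)) := by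
        rw [hY]; exact mul_sq_norm_le_integral_add hg hg' hc
      refine le_of_mul_le_mul_left ?_ (sub_pos.2 hlt)
      nlinarith
    have hb := hend b ⟨hab, le_rfl⟩
    have ha := hend a ⟨le_rfl, hab⟩
    nlinarith [norm_sub_le (g b) (g a), norm_nonneg (g b - g a), norm_nonneg (g a),
      norm_nonneg (g b), sq_nonneg (‖g b‖ - ‖g a‖)]
  · calc ‖g b - g a‖ ^ 2 ≤ (b - a) * X ^ 2 :=
          hX ▸ sq_norm_sub_le_mul_integral_sq_norm_deriv hg hg' hab
      _ = (b - a) * X * X := by ring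
      _ ≤ Y * X := by gcongr
      _ ≤ 12 * Y * X := by nlinarith [mul_nonneg hY₀ hX₀]

end Interval

section Slicing

variable {n : ℕ} {a b : Fin (n + 1) → ℝ}

theorem preimage_insertNth_Icc (i : Fin (n + 1)) :
    (fun p : ℝ × (Fin n → ℝ) => i.insertNth p.1 p.2) ⁻¹' Icc a b =
      Icc (a i) (b i) ×ˢ Icc (a ∘ i.succAbove) (b ∘ i.succAbove) :=
  ((Fin.insertNthOrderIso (fun _ => ℝ) i).preimage_Icc a b).trans (Icc_prod_eq _ _)

theorem measurePreserving_insertNth (i : Fin (n + 1)) :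
    MeasurePreserving (fun p : ℝ × (Fin n → ℝ) => (i.insertNth p.1 p.2 : Fin (n + 1) → ℝ)) :=
  (volume_preserving_piFinSuccAbove (fun _ : Fin (n + 1) => ℝ) i).symm _

variable {E : Type*} [NormedAddCommGroup E] {F : (Fin (n + 1) → ℝ) → E}

theorem MeasureTheory.IntegrableOn.comp_insertNth (i : Fin (n + 1))
    (hF : IntegrableOn F (Icc a b)) :
    IntegrableOn (fun p : ℝ × (Fin n → ℝ) => F (i.insertNth p.1 p.2))
      (Icc (a i) (b i) ×ˢ Icc (a ∘ i.succAbove) (b ∘ i.succAbove)) := by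
  rw [← preimage_insertNth_Icc]
  exact ((measurePreserving_insertNth i).integrableOn_comp_preimage
    (MeasurableEquiv.piFinSuccAbove (fun _ => ℝ) i).symm.measurableEmbedding).2 hF

theorem integrableOn_integral_insertNth [NormedSpace ℝ E] (i : Fin (n + 1))
    (hF : IntegrableOn F (Icc a b)) :
    IntegrableOn (fun y => ∫ t in Icc (a i) (b i), F (i.insertNth t y))
      (Icc (a ∘ i.succAbove) (b ∘ i.succAbove)) := by
  have := hF.comp_insertNth i
  rw [IntegrableOn, Measure.volume_eq_prod, ← Measure.prod_restrict] at this
  exact this.integral_prod_right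

theorem setIntegral_Icc_eq_integral_integral_insertNth [NormedSpace ℝ E] (i : Fin (n + 1))
    (hF : IntegrableOn F (Icc a b)) :
    ∫ x in Icc a b, F x =
      ∫ y in Icc (a ∘ i.succAbove) (b ∘ i.succAbove),
        ∫ t in Icc (a i) (b i), F (i.insertNth t y) := by
  have hint := hF.comp_insertNth i
  rw [IntegrableOn, Measure.volume_eq_prod, ← Measure.prod_restrict] at hint
  rw [← (measurePreserving_insertNth i).setIntegral_preimage_emb
    (MeasurableEquiv.piFinSuccAbove (fun _ => ℝ) i).symm.measurableEmbedding,
    preimage_insertNth_Icc, Measure.volume_eq_prod, ← Measure.prod_restrict]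
  exact integral_prod_symm _ hint

theorem memLp_sqrt_integral_insertNth (i : Fin (n + 1)) {φ : (Fin (n + 1) → ℝ) → ℝ}
    (hφ : IntegrableOn φ (Icc a b)) (hφ₀ : ∀ x, 0 ≤ φ x) :
    MemLp (fun y => √(∫ t in Icc (a i) (b i), φ (i.insertNth t y))) 2
      (volume.restrict (Icc (a ∘ i.succAbove) (b ∘ i.succAbove))) :=
  (integrableOn_integral_insertNth i hφ).memLp_two_sqrt fun _ =>
    setIntegral_nonneg measurableSet_Icc fun _ _ => hφ₀ _

theorem integral_sqrt_mul_sqrt_integral_insertNth_le (i : Fin (n + 1))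
    {φ ψ : (Fin (n + 1) → ℝ) → ℝ} (hφ : IntegrableOn φ (Icc a b)) (hψ : IntegrableOn ψ (Icc a b))
    (hφ₀ : ∀ x, 0 ≤ φ x) (hψ₀ : ∀ x, 0 ≤ ψ x) :
    ∫ y in Icc (a ∘ i.succAbove) (b ∘ i.succAbove),
        √(∫ t in Icc (a i) (b i), φ (i.insertNth t y)) *
          √(∫ t in Icc (a i) (b i), ψ (i.insertNth t y)) ≤
      √(∫ x in Icc a b, φ x) * √(∫ x in Icc a b, ψ x) := by
  have hsq : ∀ χ : (Fin (n + 1) → ℝ) → ℝ, IntegrableOn χ (Icc a b) → (∀ x, 0 ≤ χ x) →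
      ∫ y in Icc (a ∘ i.succAbove) (b ∘ i.succAbove),
        √(∫ t in Icc (a i) (b i), χ (i.insertNth t y)) ^ 2 = ∫ x in Icc a b, χ x := by
    intro χ hχ hχ₀
    rw [setIntegral_Icc_eq_integral_integral_insertNth i hχ]
    exact integral_congr_ae (.of_forall fun y =>
      Real.sq_sqrt (setIntegral_nonneg measurableSet_Icc fun _ _ => hχ₀ _))
  rw [← hsq φ hφ hφ₀, ← hsq ψ hψ hψ₀]
  exact integral_mul_le_sqrt_mul_sqrt (.of_forall fun _ => Real.sqrt_nonneg _)
    (.of_forall fun _ => Real.sqrt_nonneg _) (memLp_sqrt_integral_insertNth i hφ hφ₀)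
    (memLp_sqrt_integral_insertNth i hψ hψ₀)

end Slicing

section PartialDerivative

variable {E : Type*} [NormedAddCommGroup E] [NormedSpace ℝ E] {n : ℕ}
  {h : (Fin (n + 1) → ℝ) → E}

theorem hasDerivAt_insertNth (i : Fin (n + 1)) (y : Fin n → ℝ) (t : ℝ) :
    HasDerivAt (fun s => (i.insertNth s y : Fin (n + 1) → ℝ)) (Pi.single i 1) t := by
  have : (fun s => (i.insertNth s y : Fin (n + 1) → ℝ)) =
      Function.update (i.insertNth (α := fun _ => ℝ) 0 y) i :=
    funext fun s => (Fin.update_insertNth _ _ _ _).symm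
  rw [this]
  exact hasDerivAt_update _ i t

theorem ContDiff.hasDerivAt_comp_insertNth (hh : ContDiff ℝ 1 h) (i : Fin (n + 1))
    (y : Fin n → ℝ) (t : ℝ) :
    HasDerivAt (fun s => h (i.insertNth s y)) (fderiv ℝ h (i.insertNth t y) (Pi.single i 1)) t :=
  (hh.differentiable one_ne_zero _).hasFDerivAt.comp_hasDerivAt t (hasDerivAt_insertNth i y t)

theorem ContDiff.continuous_fderiv_apply_single (hh : ContDiff ℝ 1 h) (i : Fin (n + 1)) :
    Continuous fun x => fderiv ℝ h x (Pi.single i 1) :=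
  (hh.continuous_fderiv one_ne_zero).clm_apply continuous_const

theorem setIntegral_Icc_fderiv_single [CompleteSpace E] (hh : ContDiff ℝ 1 h)
    {a b : Fin (n + 1) → ℝ} (i : Fin (n + 1)) (hab : a i ≤ b i) :
    ∫ x in Icc a b, fderiv ℝ h x (Pi.single i 1) =
      ∫ y in Icc (a ∘ i.succAbove) (b ∘ i.succAbove),
        (h (i.insertNth (b i) y) - h (i.insertNth (a i) y)) := by
  have hD := hh.continuous_fderiv_apply_single i
  rw [setIntegral_Icc_eq_integral_integral_insertNth i hD.integrableOn_Icc]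
  refine integral_congr_ae (.of_forall fun y => ?_)
  dsimp only
  rw [integral_Icc_eq_integral_Ioc, ← intervalIntegral.integral_of_le hab]
  exact intervalIntegral.integral_eq_sub_of_hasDerivAt
    (fun t _ => hh.hasDerivAt_comp_insertNth i y t)
    ((hD.comp (continuous_id.finInsertNth i continuous_const)).intervalIntegrable _ _)

end PartialDerivative

section Box

variable {E : Type*} [NormedAddCommGroup E] [InnerProductSpace ℝ E] [CompleteSpace E] {n : ℕ}
  {h : (Fin (n + 1) → ℝ) → E}

theorem sq_norm_setIntegral_fderiv_single_le
    (hh : ContDiff ℝ 1 h) {a b : Fin (n + 1) → ℝ} (i : Fin (n + 1)) (hab : a i ≤ b i) :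
    ‖∫ x in Icc a b, fderiv ℝ h x (Pi.single i 1)‖ ^ 2 ≤
      12 * volume.real (Icc (a ∘ i.succAbove) (b ∘ i.succAbove)) *
        √(∫ x in Icc a b, ‖h x‖ ^ 2) *
          √(∫ x in Icc a b, ‖fderiv ℝ h x (Pi.single i 1)‖ ^ 2) := by
  set Q' := Icc (a ∘ i.succAbove) (b ∘ i.succAbove)
  set D := fun x => fderiv ℝ h x (Pi.single i 1)
  set Y := fun y => √(∫ t in Icc (a i) (b i), ‖h (i.insertNth t y)‖ ^ 2)
  set X := fun y => √(∫ t in Icc (a i) (b i), ‖D (i.insertNth t y)‖ ^ 2)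
  have hD : Continuous D := hh.continuous_fderiv_apply_single i
  have hh₂ : IntegrableOn (fun x => ‖h x‖ ^ 2) (Icc a b) :=
    (hh.continuous.norm.pow 2).integrableOn_Icc
  have hD₂ : IntegrableOn (fun x => ‖D x‖ ^ 2) (Icc a b) := (hD.norm.pow 2).integrableOn_Icc
  have hjump : Continuous fun y => h (i.insertNth (b i) y) - h (i.insertNth (a i) y) :=
    (hh.continuous.comp (continuous_const.finInsertNth i continuous_id)).sub
      (hh.continuous.comp (continuous_const.finInsertNth i continuous_id))
  have hslice : ∀ y,
      ‖h (i.insertNth (b i) y) - h (i.insertNth (a i) y)‖ ^ 2 ≤ 12 * (Y y * X y) := fun y => by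
    simpa only [mul_assoc] using sq_norm_sub_le_mul_sqrt_mul_sqrt
      (g' := fun t => D (i.insertNth t y)) (hh.hasDerivAt_comp_insertNth i y)
      (hD.comp (continuous_id.finInsertNth (A := fun _ => ℝ) i continuous_const)) hab
  have hYX : IntegrableOn (fun y => 12 * (Y y * X y)) Q' :=
    ((memLp_sqrt_integral_insertNth i hh₂ fun _ => by positivity).integrable_mul
      (memLp_sqrt_integral_insertNth i hD₂ fun _ => by positivity)).const_mul 12
  have : IsFiniteMeasure (volume.restrict Q') :=
    isFiniteMeasure_restrict.2 measure_Icc_lt_top.ne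
  calc ‖∫ x in Icc a b, D x‖ ^ 2
      = ‖∫ y in Q', (h (i.insertNth (b i) y) - h (i.insertNth (a i) y))‖ ^ 2 := by
        rw [setIntegral_Icc_fderiv_single hh i hab]
    _ ≤ volume.real Q' * ∫ y in Q', ‖h (i.insertNth (b i) y) - h (i.insertNth (a i) y)‖ ^ 2 := by
        simpa using sq_norm_integral_le_measureReal_mul
          (hjump.memLp_two_restrict_of_isCompact (μ := volume) (s := Q') isCompact_Icc)
    _ ≤ volume.real Q' * ∫ y in Q', 12 * (Y y * X y) := by
        refine mul_le_mul_of_nonneg_left ?_ measureReal_nonneg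
        exact setIntegral_mono_on (hjump.norm.pow 2).integrableOn_Icc hYX measurableSet_Icc
          fun y _ => hslice y
    _ ≤ volume.real Q' *
          (12 * (√(∫ x in Icc a b, ‖h x‖ ^ 2) * √(∫ x in Icc a b, ‖D x‖ ^ 2))) := by
        rw [integral_const_mul]
        gcongr
        exact integral_sqrt_mul_sqrt_integral_insertNth_le i hh₂ hD₂ (fun _ => by positivity)
          fun _ => by positivity
    _ = _ := by ring

end Box

section Cube

theorem cube_eq_Icc (n : ℕ) (a : Fin n → ℝ) (l : ℝ) : cube n a l = Icc a (a + fun _ => l) := by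
  ext x
  simp [cube, Pi.le_def, forall_and]

variable {E : Type*} [NormedAddCommGroup E] [InnerProductSpace ℝ E] [CompleteSpace E] {m : ℕ}
  {h : (Fin (m + 1) → ℝ) → E}

theorem sq_norm_setIntegral_cube_fderiv_single_le (hh : ContDiff ℝ 1 h) (a : Fin (m + 1) → ℝ)
    {l : ℝ} (hl : 0 ≤ l) (i : Fin (m + 1)) :
    ‖∫ x in cube (m + 1) a l, fderiv ℝ h x (Pi.single i 1)‖ ^ 2 ≤
      12 * l ^ m * √(∫ x in cube (m + 1) a l, ‖h x‖ ^ 2) *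
        √(∫ x in cube (m + 1) a l, ‖fderiv ℝ h x (Pi.single i 1)‖ ^ 2) := by
  have hab : a ≤ a + fun _ => l := fun j => by simp [hl]
  have hface :
      volume.real (Icc (a ∘ i.succAbove) ((a + fun _ => l) ∘ i.succAbove)) = l ^ m := by
    rw [measureReal_def, Real.volume_Icc_pi_toReal (a := a ∘ i.succAbove)
      (b := (a + fun _ => l) ∘ i.succAbove) fun j => hab _]
    simp
  simpa only [cube_eq_Icc, hface] using sq_norm_setIntegral_fderiv_single_le hh i (hab i)

theorem sum_sq_norm_setIntegral_cube_fderiv_le (hh : ContDiff ℝ 1 h) (a : Fin (m + 1) → ℝ)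
    {l : ℝ} (hl : 0 ≤ l) :
    ∑ i, ‖∫ x in cube (m + 1) a l, fderiv ℝ h x (Pi.single i 1)‖ ^ 2 ≤
      12 * (m + 1) * l ^ m * √(∫ x in cube (m + 1) a l, ‖h x‖ ^ 2) *
        √(∫ x in cube (m + 1) a l, √(∑ i, ‖fderiv ℝ h x (Pi.single i 1)‖ ^ 2) ^ 2) := by
  have hD : ∀ i : Fin (m + 1), Continuous fun x => ‖fderiv ℝ h x (Pi.single i 1)‖ ^ 2 :=
    fun i => (hh.continuous_fderiv_apply_single i).norm.pow 2
  have hpartial : ∀ i, ∫ x in cube (m + 1) a l, ‖fderiv ℝ h x (Pi.single i 1)‖ ^ 2 ≤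
      ∫ x in cube (m + 1) a l, √(∑ i, ‖fderiv ℝ h x (Pi.single i 1)‖ ^ 2) ^ 2 := by
    intro i
    rw [cube_eq_Icc]
    refine setIntegral_mono_on (hD i).integrableOn_Icc
      ((continuous_finsetSum _ fun j _ => hD j).sqrt.pow 2).integrableOn_Icc measurableSet_Icc
      fun x _ => ?_
    rw [Real.sq_sqrt (by positivity)]
    exact Finset.single_le_sum (f := fun j => ‖fderiv ℝ h x (Pi.single j 1)‖ ^ 2)
      (fun j _ => by positivity) (Finset.mem_univ i)
  calc ∑ i, ‖∫ x in cube (m + 1) a l, fderiv ℝ h x (Pi.single i 1)‖ ^ 2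
      ≤ ∑ _i : Fin (m + 1), 12 * l ^ m * √(∫ x in cube (m + 1) a l, ‖h x‖ ^ 2) *
          √(∫ x in cube (m + 1) a l, √(∑ i, ‖fderiv ℝ h x (Pi.single i 1)‖ ^ 2) ^ 2) :=
        Finset.sum_le_sum fun i _ =>
          (sq_norm_setIntegral_cube_fderiv_single_le hh a hl i).trans
            (mul_le_mul_of_nonneg_left (Real.sqrt_le_sqrt (hpartial i)) (by positivity))
    _ = _ := by
        simp only [Finset.sum_const, Finset.card_univ, Fintype.card_fin, nsmul_eq_mul]
        push_cast
        ring

end Cube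

theorem sqrt_mul_pow_mul_sqrt_mul_sqrt {c l P G : ℝ} (m : ℕ) (hc : 0 ≤ c) (hl : 0 ≤ l)
    (hP : 0 ≤ P) (hG : 0 ≤ G) :
    √(c * l ^ m * √P * √G) = √c * l ^ ((m : ℝ) / 2) * P ^ ((1 : ℝ) / 4) * G ^ ((1 : ℝ) / 4) := by
  have hquarter : ∀ x : ℝ, 0 ≤ x → √(√x) = x ^ ((1 : ℝ) / 4) := fun x hx => by
    rw [Real.sqrt_eq_rpow, Real.sqrt_eq_rpow, ← Real.rpow_mul hx]; norm_num
  rw [Real.sqrt_mul (by positivity), Real.sqrt_mul (by positivity), Real.sqrt_mul hc,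
    hquarter P hP, hquarter G hG, Real.sqrt_eq_rpow (l ^ m), ← Real.rpow_natCast,
    ← Real.rpow_mul hl, mul_one_div]

/-- For a cube `Q ⊂ ℝⁿ` and `h ∈ H¹(Q)`:
`|∫_Q ∇h| ≤ C ℓ(Q)^{(n−1)/2} (∫_Q |h|²)^{1/4} (∫_Q |∇h|²)^{1/4}`, `C = C(n)`. -/
theorem gradient_average_interpolation (n : ℕ) (hn : 1 ≤ n) :
    ∃ C : ℝ, 0 < C ∧
      ∀ (a : Fin n → ℝ) (l : ℝ), 0 < l →
        ∀ h : (Fin n → ℝ) → ℂ, ContDiff ℝ 1 h →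
          Real.sqrt (∑ i, ‖∫ x in cube n a l, fderiv ℝ h x (Pi.single i 1)‖ ^ 2) ≤
            C * l ^ (((n : ℝ) - 1) / 2) *
              (∫ x in cube n a l, ‖h x‖ ^ 2) ^ ((1 : ℝ) / 4) *
              (∫ x in cube n a l,
                Real.sqrt (∑ i, ‖fderiv ℝ h x (Pi.single i 1)‖ ^ 2) ^ 2) ^ ((1 : ℝ) / 4) := by
  obtain ⟨m, rfl⟩ : ∃ m, n = m + 1 := ⟨n - 1, by omega⟩
  refine ⟨√(12 * (m + 1)), by positivity, fun a l hl h hh => ?_⟩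
  have hexp : (((m + 1 : ℕ) : ℝ) - 1) / 2 = (m : ℝ) / 2 := by push_cast; ring
  rw [hexp, ← sqrt_mul_pow_mul_sqrt_mul_sqrt m (by positivity) hl.le
    (setIntegral_nonneg (cube_eq_Icc _ a l ▸ measurableSet_Icc) fun _ _ => by positivity)
    (setIntegral_nonneg (cube_eq_Icc _ a l ▸ measurableSet_Icc) fun _ _ => by positivity)]
  exact Real.sqrt_le_sqrt (sum_sq_norm_setIntegral_cube_fderiv_le hh a hl.le)
end
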